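/- arXiv:1501.05619 — 5 statements merged into one kernel-verified Lean document; each statement's English description precedes it below -/
import Mathlib

section
/- For every r ≥ 1 and every r-local edge colouring of the balanced complete bipartite graph K_{n,n}, the vertex set of K_{n,n} can be covered by at most (2r-1)·r pairwise vertex-disjoint monochromatic connected matchings. -/
open SimpleGraph Set

variable {V : Type*}

/-- The spanning subgraph of `G` consisting of the edges of colour `x`. -/
def colourGraph (G : SimpleGraph V) (c : Sym2 V → ℕ) (x : ℕ) : SimpleGraph V where
  Adj u v := G.Adj u v ∧ c s(u, v) = x
  symm := ⟨fun u v h => ⟨h.1.symm, by rw [Sym2.eq_swap]; exact h.2⟩⟩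
  loopless := ⟨fun u h => G.loopless.irrefl u h.1⟩

/-- An edge colouring is `r`-local if every vertex is incident with edges of
at most `r` distinct colours. -/
def LocalColouring (G : SimpleGraph V) (c : Sym2 V → ℕ) (r : ℕ) : Prop :=
  ∀ v : V, {x : ℕ | ∃ w, G.Adj v w ∧ c s(v, w) = x}.ncard ≤ r

/-- `S` is the vertex set of a monochromatic cycle (a single vertex and a
single edge each count as a cycle). -/
def IsMonoCycle (G : SimpleGraph V) (c : Sym2 V → ℕ) (S : Set V) : Prop :=
  (∃ v, S = {v}) ∨
  (∃ u v, G.Adj u v ∧ S = {u, v}) ∨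
  (∃ (v : V) (p : G.Walk v v), p.IsCycle ∧ S = {x | x ∈ p.support} ∧
    ∃ k, ∀ e ∈ p.edges, c e = k)

/-- `S` is the vertex set of a monochromatic path (a single vertex and a
single edge each count as a path). -/
def IsMonoPath (G : SimpleGraph V) (c : Sym2 V → ℕ) (S : Set V) : Prop :=
  ∃ (u v : V) (p : G.Walk u v), p.IsPath ∧ S = {x | x ∈ p.support} ∧
    ∃ k, ∀ e ∈ p.edges, c e = k

/-- `M` (a set of edges) is a monochromatic connected matching of colour `x` in `G`:
all edges have colour `x`, they are pairwise vertex-disjoint, and they all lie in one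
connected component of the subgraph formed by the edges of colour `x`. -/
def IsMonoConnMatching (G : SimpleGraph V) (c : Sym2 V → ℕ) (x : ℕ)
    (M : Set (Sym2 V)) : Prop :=
  (∀ e ∈ M, e ∈ G.edgeSet ∧ c e = x) ∧
  (∀ e ∈ M, ∀ f ∈ M, e ≠ f → ∀ v, v ∈ e → v ∉ f) ∧
  (∀ e ∈ M, ∀ f ∈ M, ∀ u v : V, u ∈ e → v ∈ f → (colourGraph G c x).Reachable u v)

/-- The set of vertices covered by a matching (given by its edge set). -/
def matchSupp (M : Set (Sym2 V)) : Set V := {v | ∃ e ∈ M, v ∈ e}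

/-- A vertex `v` sees colour `x`, i.e. is incident with an edge of colour `x`. -/
def Sees (G : SimpleGraph V) (c : Sym2 V → ℕ) (v : V) (x : ℕ) : Prop :=
  ∃ w, G.Adj v w ∧ c s(v, w) = x


lemma inner_lemma {n : ℕ} (d : Fin n → Fin n → ℕ) (astar : Fin n) :
    ∀ k (A B : Finset (Fin n)), A.card = k → A.card = B.card →
    ∃ (T : Finset (Fin n × Fin n)) (A' B' : Finset (Fin n)),
      A' ⊆ A ∧ B' ⊆ B ∧ A'.card = B'.card ∧
      (∀ e ∈ T, e.1 ∈ A ∧ e.1 ∉ A' ∧ e.2 ∈ B ∧ e.2 ∉ B' ∧ d e.1 e.2 = d astar e.2) ∧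
      (∀ e ∈ T, ∀ f ∈ T, e.1 = f.1 → e = f) ∧
      (∀ e ∈ T, ∀ f ∈ T, e.2 = f.2 → e = f) ∧
      (∀ a ∈ A, a ∉ A' → ∃ e ∈ T, e.1 = a) ∧
      (∀ b ∈ B, b ∉ B' → ∃ e ∈ T, e.2 = b) ∧
      (∀ a ∈ A', ∀ b ∈ B', d a b ≠ d astar b) := by
  intro k
  induction k using Nat.strong_induction_on with
  | _ k IH =>
    intro A B hk hAB
    by_cases hgood : ∃ a ∈ A, ∃ b ∈ B, d a b = d astar b
    · obtain ⟨a, ha, b, hb, hab⟩ := hgood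
      have hk1 : (A.erase a).card < k := by
        rw [← hk]; exact Finset.card_erase_lt_of_mem ha
      obtain ⟨T, A', B', h1, h2, h3, h4, h5, h6, h7, h8, h9⟩ :=
        IH (A.erase a).card hk1 (A.erase a) (B.erase b) rfl
          (by rw [Finset.card_erase_of_mem ha, Finset.card_erase_of_mem hb, hAB])
      refine ⟨insert (a, b) T, A', B', h1.trans (Finset.erase_subset _ _),
        h2.trans (Finset.erase_subset _ _), h3, ?_, ?_, ?_, ?_, ?_, h9⟩
      · intro e he
        rcases Finset.mem_insert.mp he with rfl | he
        · exact ⟨ha, fun h => (Finset.mem_erase.mp (h1 h)).1 rfl,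
            hb, fun h => (Finset.mem_erase.mp (h2 h)).1 rfl, hab⟩
        · obtain ⟨e1, e2, e3, e4, e5⟩ := h4 e he
          exact ⟨Finset.mem_of_mem_erase e1, e2, Finset.mem_of_mem_erase e3, e4, e5⟩
      · intro e he f hf hef
        rcases Finset.mem_insert.mp he with rfl | he <;>
          rcases Finset.mem_insert.mp hf with rfl | hf
        · rfl
        · exact absurd hef.symm (Finset.mem_erase.mp (h4 f hf).1).1
        · exact absurd hef (Finset.mem_erase.mp (h4 e he).1).1
        · exact h5 e he f hf hef
      · intro e he f hf hef
        rcases Finset.mem_insert.mp he with rfl | he <;>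
          rcases Finset.mem_insert.mp hf with rfl | hf
        · rfl
        · exact absurd hef.symm (Finset.mem_erase.mp (h4 f hf).2.2.1).1
        · exact absurd hef (Finset.mem_erase.mp (h4 e he).2.2.1).1
        · exact h6 e he f hf hef
      · intro a' ha' ha'n
        by_cases hcase : a' = a
        · exact ⟨(a, b), Finset.mem_insert_self _ _, hcase.symm⟩
        · obtain ⟨e, he, he1⟩ := h7 a' (Finset.mem_erase.mpr ⟨hcase, ha'⟩) ha'n
          exact ⟨e, Finset.mem_insert_of_mem he, he1⟩
      · intro b' hb' hb'n
        by_cases hcase : b' = b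
        · exact ⟨(a, b), Finset.mem_insert_self _ _, hcase.symm⟩
        · obtain ⟨e, he, he1⟩ := h8 b' (Finset.mem_erase.mpr ⟨hcase, hb'⟩) hb'n
          exact ⟨e, Finset.mem_insert_of_mem he, he1⟩
    · push_neg at hgood
      exact ⟨∅, A, B, Finset.Subset.refl _, Finset.Subset.refl _, hAB,
        by simp, by simp, by simp,
        fun a ha han => absurd ha han,
        fun b hb hbn => absurd hb hbn,
        hgood⟩


lemma outer_lemma {n : ℕ} (d : Fin n → Fin n → ℕ) (r : ℕ)
    (hA : ∀ a : Fin n, (Finset.univ.image (d a)).card ≤ r) :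
    ∀ t (A B : Finset (Fin n)), A.card = B.card →
    (∀ b ∈ B, (A.image (fun a => d a b)).card ≤ t) →
    ∃ T : Finset (Fin n × Fin n × Fin n),
      (∀ e ∈ T, e.1 ∈ A ∧ e.2.1 ∈ B ∧ d e.1 e.2.1 = d e.2.2 e.2.1) ∧
      (∀ e ∈ T, ∀ f ∈ T, e.1 = f.1 → e = f) ∧
      (∀ e ∈ T, ∀ f ∈ T, e.2.1 = f.2.1 → e = f) ∧
      (∀ a ∈ A, ∃ e ∈ T, e.1 = a) ∧
      (∀ b ∈ B, ∃ e ∈ T, e.2.1 = b) ∧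
      (T.image fun e => (d e.2.2 e.2.1, e.2.2)).card ≤ t * r := by
  intro t
  induction t with
  | zero =>
    intro A B hAB hcol
    rcases B.eq_empty_or_nonempty with rfl | ⟨b, hb⟩
    · have hAe : A = ∅ := Finset.card_eq_zero.mp (by simpa using hAB)
      subst hAe
      exact ⟨∅, by simp, by simp, by simp, by simp, by simp, by simp⟩
    · exfalso
      have h0 := hcol b hb
      have : A.image (fun a => d a b) = ∅ := Finset.card_eq_zero.mp (Nat.le_zero.mp h0)
      have hAe : A = ∅ := Finset.image_eq_empty.mp this
      rw [hAe] at hAB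
      simp only [Finset.card_empty] at hAB
      have : B = ∅ := Finset.card_eq_zero.mp hAB.symm
      subst this
      simp at hb
  | succ t IH =>
    intro A B hAB hcol
    rcases B.eq_empty_or_nonempty with rfl | hBne
    · have hAe : A = ∅ := Finset.card_eq_zero.mp (by simpa using hAB)
      subst hAe
      exact ⟨∅, by simp, by simp, by simp, by simp, by simp, by simp⟩
    · have hAne : A.Nonempty := by
        rw [← Finset.card_pos, hAB, Finset.card_pos]; exact hBne
      obtain ⟨astar, hastar⟩ := hAne
      obtain ⟨T0, A', B', g1, g2, g3, g4, g5, g6, g7, g8, g9⟩ :=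
        inner_lemma d astar A.card A B rfl hAB
      have hcol' : ∀ b ∈ B', (A'.image (fun a => d a b)).card ≤ t := by
        intro b hb
        have hsub : A'.image (fun a => d a b) ⊆ (A.image (fun a => d a b)).erase (d astar b) := by
          intro x hx
          obtain ⟨a, ha, rfl⟩ := Finset.mem_image.mp hx
          exact Finset.mem_erase.mpr ⟨g9 a ha b hb, Finset.mem_image.mpr ⟨a, g1 ha, rfl⟩⟩
        calc (A'.image (fun a => d a b)).card
            ≤ ((A.image (fun a => d a b)).erase (d astar b)).card := Finset.card_le_card hsub
          _ = (A.image (fun a => d a b)).card - 1 :=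
              Finset.card_erase_of_mem (Finset.mem_image.mpr ⟨astar, hastar, rfl⟩)
          _ ≤ (t + 1) - 1 := Nat.sub_le_sub_right (hcol b (g2 hb)) 1
          _ = t := rfl
      obtain ⟨T', f1, f2, f3, f4, f5, f6⟩ := IH A' B' g3 hcol'
      refine ⟨(T0.image fun e => (e.1, e.2, astar)) ∪ T', ?_, ?_, ?_, ?_, ?_, ?_⟩
      · intro e he
        rcases Finset.mem_union.mp he with he | he
        · obtain ⟨e0, he0, rfl⟩ := Finset.mem_image.mp he
          obtain ⟨q1, _, q3, _, q5⟩ := g4 e0 he0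
          exact ⟨q1, q3, q5⟩
        · obtain ⟨q1, q2, q3⟩ := f1 e he
          exact ⟨g1 q1, g2 q2, q3⟩
      · intro e he f hf hef
        rcases Finset.mem_union.mp he with he | he <;>
          rcases Finset.mem_union.mp hf with hf | hf
        · obtain ⟨e0, he0, rfl⟩ := Finset.mem_image.mp he
          obtain ⟨f0, hf0, rfl⟩ := Finset.mem_image.mp hf
          rw [g5 e0 he0 f0 hf0 hef]
        · obtain ⟨e0, he0, rfl⟩ := Finset.mem_image.mp he
          exact absurd ((f1 f hf).1) (by rw [← hef]; exact (g4 e0 he0).2.1)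
        · obtain ⟨f0, hf0, rfl⟩ := Finset.mem_image.mp hf
          exact absurd ((f1 e he).1) (by rw [hef]; exact (g4 f0 hf0).2.1)
        · exact f2 e he f hf hef
      · intro e he f hf hef
        rcases Finset.mem_union.mp he with he | he <;>
          rcases Finset.mem_union.mp hf with hf | hf
        · obtain ⟨e0, he0, rfl⟩ := Finset.mem_image.mp he
          obtain ⟨f0, hf0, rfl⟩ := Finset.mem_image.mp hf
          rw [g6 e0 he0 f0 hf0 hef]
        · obtain ⟨e0, he0, rfl⟩ := Finset.mem_image.mp he
          exact absurd ((f1 f hf).2.1) (by rw [← hef]; exact (g4 e0 he0).2.2.2.1)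
        · obtain ⟨f0, hf0, rfl⟩ := Finset.mem_image.mp hf
          exact absurd ((f1 e he).2.1) (by rw [hef]; exact (g4 f0 hf0).2.2.2.1)
        · exact f3 e he f hf hef
      · intro a ha
        by_cases ha' : a ∈ A'
        · obtain ⟨e, he, he1⟩ := f4 a ha'
          exact ⟨e, Finset.mem_union_right _ he, he1⟩
        · obtain ⟨e0, he0, he1⟩ := g7 a ha ha'
          exact ⟨(e0.1, e0.2, astar),
            Finset.mem_union_left _ (Finset.mem_image.mpr ⟨e0, he0, rfl⟩), he1⟩
      · intro b hb
        by_cases hb' : b ∈ B'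
        · obtain ⟨e, he, he1⟩ := f5 b hb'
          exact ⟨e, Finset.mem_union_right _ he, he1⟩
        · obtain ⟨e0, he0, he1⟩ := g8 b hb hb'
          exact ⟨(e0.1, e0.2, astar),
            Finset.mem_union_left _ (Finset.mem_image.mpr ⟨e0, he0, rfl⟩), he1⟩
      · rw [Finset.image_union]
        refine le_trans (Finset.card_union_le _ _) ?_
        have hst : ((T0.image fun e => (e.1, e.2, astar)).image
            fun e => (d e.2.2 e.2.1, e.2.2)) ⊆
            (Finset.univ.image (d astar)).image (fun x => (x, astar)) := by
          intro p hp
          obtain ⟨e, he, rfl⟩ := Finset.mem_image.mp hp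
          obtain ⟨e0, he0, rfl⟩ := Finset.mem_image.mp he
          exact Finset.mem_image.mpr ⟨d astar e0.2,
            Finset.mem_image.mpr ⟨e0.2, Finset.mem_univ _, rfl⟩, rfl⟩
        have h1 : ((T0.image fun e => (e.1, e.2, astar)).image
            fun e => (d e.2.2 e.2.1, e.2.2)).card ≤ r :=
          le_trans (Finset.card_le_card hst) (le_trans (Finset.card_image_le) (hA astar))
        calc _ ≤ r + t * r := Nat.add_le_add h1 f6
          _ = (t + 1) * r := by ring


/-- For every `r ≥ 1` and every `r`-local edge colouring of
`K_{n,n}`, the vertex set of `K_{n,n}` can be covered by at most `(2r-1)·r`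
pairwise vertex-disjoint monochromatic connected matchings. -/
theorem local_matching_cover_bipartite (r n : ℕ) (hr : 1 ≤ r)
    (c : Sym2 (Fin n ⊕ Fin n) → ℕ)
    (hc : LocalColouring (completeBipartiteGraph (Fin n) (Fin n)) c r) :
    ∃ (M : Fin ((2 * r - 1) * r) → Set (Sym2 (Fin n ⊕ Fin n)))
      (col : Fin ((2 * r - 1) * r) → ℕ),
      (∀ i, IsMonoConnMatching (completeBipartiteGraph (Fin n) (Fin n)) c (col i) (M i)) ∧
      (∀ i j, i ≠ j → Disjoint (matchSupp (M i)) (matchSupp (M j))) ∧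
      (∀ v : Fin n ⊕ Fin n, ∃ i, v ∈ matchSupp (M i)) := by
  classical
  set G := completeBipartiteGraph (Fin n) (Fin n) with hG
  set d : Fin n → Fin n → ℕ := fun a b => c s(Sum.inl a, Sum.inr b) with hd
  have hadj : ∀ (a b : Fin n), G.Adj (Sum.inl a) (Sum.inr b) := by
    intro a b; simp [hG, completeBipartiteGraph]
  -- colours at a left vertex
  have hAleft : ∀ a : Fin n, (Finset.univ.image (d a)).card ≤ r := by
    intro a
    have hset : {x : ℕ | ∃ w, G.Adj (Sum.inl a) w ∧ c s(Sum.inl a, w) = x} =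
        ↑(Finset.univ.image (d a)) := by
      ext x
      simp only [Set.mem_setOf_eq, Finset.coe_image, Finset.coe_univ, Set.image_univ,
        Set.mem_range]
      constructor
      · rintro ⟨w, hw, rfl⟩
        cases w with
        | inl a' => simp [hG, completeBipartiteGraph] at hw
        | inr b => exact ⟨b, rfl⟩
      · rintro ⟨b, rfl⟩
        exact ⟨Sum.inr b, hadj a b, rfl⟩
    have := hc (Sum.inl a)
    rw [hset, Set.ncard_coe_finset] at this
    exact this
  have hAright : ∀ b : Fin n, (Finset.univ.image (fun a => d a b)).card ≤ r := by
    intro b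
    have hset : {x : ℕ | ∃ w, G.Adj (Sum.inr b) w ∧ c s(Sum.inr b, w) = x} =
        ↑(Finset.univ.image (fun a => d a b)) := by
      ext x
      simp only [Set.mem_setOf_eq, Finset.coe_image, Finset.coe_univ, Set.image_univ,
        Set.mem_range]
      constructor
      · rintro ⟨w, hw, rfl⟩
        cases w with
        | inl a =>
          refine ⟨a, ?_⟩
          show c s(Sum.inl a, Sum.inr b) = c s(Sum.inr b, Sum.inl a)
          rw [Sym2.eq_swap]
        | inr b' => simp [hG, completeBipartiteGraph] at hw
      · rintro ⟨a, rfl⟩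
        refine ⟨Sum.inl a, (hadj a b).symm, ?_⟩
        show c s(Sum.inr b, Sum.inl a) = c s(Sum.inl a, Sum.inr b)
        rw [Sym2.eq_swap]
    have := hc (Sum.inr b)
    rw [hset, Set.ncard_coe_finset] at this
    exact this
  obtain ⟨T, t1, t2, t3, t4, t5, t6⟩ :=
    outer_lemma d r hAleft r Finset.univ Finset.univ rfl
      (fun b _ => hAright b)
  set lbl : (Fin n × Fin n × Fin n) → ℕ × Fin n := fun e => (d e.2.2 e.2.1, e.2.2) with hlbl
  set L : List (ℕ × Fin n) := (T.image lbl).toList with hL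
  set N := (2 * r - 1) * r with hN
  have hlen : L.length ≤ N := by
    rw [hL, Finset.length_toList]
    refine le_trans t6 ?_
    exact Nat.mul_le_mul_right r (by omega)
  -- the matchings
  set M : Fin N → Set (Sym2 (Fin n ⊕ Fin n)) := fun i =>
    {e | ∃ (h : (i : ℕ) < L.length), ∃ p ∈ T, lbl p = L.get ⟨i, h⟩ ∧
      e = s(Sum.inl p.1, Sum.inr p.2.1)} with hM
  set col : Fin N → ℕ := fun i =>
    if h : (i : ℕ) < L.length then (L.get ⟨i, h⟩).1 else 0 with hcolf
  -- the colour of the edge of an entry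
  have hec : ∀ p ∈ T, c s(Sum.inl p.1, Sum.inr p.2.1) = (lbl p).1 := by
    intro p hp
    show d p.1 p.2.1 = d p.2.2 p.2.1
    exact (t1 p hp).2.2
  -- reachability to the hub
  have hreach : ∀ p ∈ T, ∀ u, u = Sum.inl p.1 ∨ u = Sum.inr p.2.1 →
      (colourGraph G c (lbl p).1).Reachable u (Sum.inl p.2.2) := by
    intro p hp u hu
    have adj1 : (colourGraph G c (lbl p).1).Adj (Sum.inr p.2.1) (Sum.inl p.2.2) := by
      refine ⟨(hadj p.2.2 p.2.1).symm, ?_⟩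
      rw [Sym2.eq_swap]
    have adj2 : (colourGraph G c (lbl p).1).Adj (Sum.inl p.1) (Sum.inr p.2.1) :=
      ⟨hadj p.1 p.2.1, hec p hp⟩
    rcases hu with rfl | rfl
    · exact (adj2.reachable).trans adj1.reachable
    · exact adj1.reachable
  -- distinct entries share no vertex
  have nonshare : ∀ p ∈ T, ∀ q ∈ T, p ≠ q → ∀ v : Fin n ⊕ Fin n,
      v ∈ s(Sum.inl p.1, Sum.inr p.2.1) → v ∉ s(Sum.inl q.1, Sum.inr q.2.1) := by
    intro p hp q hq hpq v hv hv'
    rw [Sym2.mem_iff] at hv hv'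
    rcases hv with rfl | rfl <;> rcases hv' with h | h
    · exact hpq (t2 p hp q hq (Sum.inl.inj h))
    · exact Sum.inl_ne_inr h
    · exact Sum.inr_ne_inl h
    · exact hpq (t3 p hp q hq (Sum.inr.inj h))
  refine ⟨M, col, ?_, ?_, ?_⟩
  · -- each is a monochromatic connected matching
    intro i
    by_cases h : (i : ℕ) < L.length
    · refine ⟨?_, ?_, ?_⟩
      · rintro e ⟨_, p, hp, hpl, rfl⟩
        refine ⟨(hadj p.1 p.2.1), ?_⟩
        rw [hec p hp]
        exact ((dif_pos h).trans (congrArg Prod.fst hpl).symm).symm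
      · rintro e ⟨_, p, hp, hpl, rfl⟩ f ⟨_, q, hq, hql, rfl⟩ hef v hv
        have hpq : p ≠ q := by rintro rfl; exact hef rfl
        exact nonshare p hp q hq hpq v hv
      · rintro e ⟨_, p, hp, hpl, rfl⟩ f ⟨_, q, hq, hql, rfl⟩ u v hu hv
        rw [Sym2.mem_iff] at hu hv
        have hcol_i : col i = (lbl p).1 :=
          (dif_pos h).trans (congrArg Prod.fst hpl).symm
        have hru : (colourGraph G c (col i)).Reachable u (Sum.inl p.2.2) := by
          rw [hcol_i]; exact hreach p hp u hu
        have hrv : (colourGraph G c (col i)).Reachable v (Sum.inl q.2.2) := by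
          have : col i = (lbl q).1 :=
            (dif_pos h).trans (congrArg Prod.fst hql).symm
          rw [this]; exact hreach q hq v hv
        have hhub : (Sum.inl p.2.2 : Fin n ⊕ Fin n) = Sum.inl q.2.2 := by
          have : lbl p = lbl q := by rw [hpl, hql]
          have h2 : p.2.2 = q.2.2 := congrArg (fun z : ℕ × Fin n => z.2) this
          rw [h2]
        exact hru.trans (hhub ▸ hrv.symm)
    · have hMe : M i = ∅ := by
        rw [hM]
        ext e
        simp only [Set.mem_setOf_eq, Set.mem_empty_iff_false, iff_false]
        rintro ⟨h', _⟩
        exact h h'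
      rw [hMe]
      exact ⟨fun e he => absurd he (Set.notMem_empty e),
        fun e he => absurd he (Set.notMem_empty e),
        fun e he => absurd he (Set.notMem_empty e)⟩
  · -- pairwise disjoint supports
    intro i j hij
    rw [Set.disjoint_left]
    rintro v ⟨e, ⟨hi, p, hp, hpl, rfl⟩, hv⟩ ⟨f, ⟨hj, q, hq, hql, rfl⟩, hvf⟩
    have hpq : p ≠ q := by
      rintro rfl
      rw [hpl] at hql
      have : (⟨(i : ℕ), hi⟩ : Fin L.length) = ⟨(j : ℕ), hj⟩ :=
        (List.Nodup.get_inj_iff (Finset.nodup_toList _)).mp hql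
      exact hij (Fin.ext (Fin.mk.inj this))
    exact nonshare p hp q hq hpq v hv hvf
  · -- coverage
    intro v
    have key : ∀ p ∈ T, ∀ u : Fin n ⊕ Fin n, u ∈ s(Sum.inl p.1, Sum.inr p.2.1) →
        ∃ i, u ∈ matchSupp (M i) := by
      intro p hp u hu
      have hmem : lbl p ∈ L := by
        rw [hL, Finset.mem_toList]
        exact Finset.mem_image.mpr ⟨p, hp, rfl⟩
      obtain ⟨k, hk⟩ := List.mem_iff_get.mp hmem
      have hik : (k : ℕ) < N := lt_of_lt_of_le k.2 hlen
      refine ⟨⟨(k : ℕ), hik⟩, s(Sum.inl p.1, Sum.inr p.2.1), ?_, hu⟩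
      exact ⟨k.2, p, hp, by rw [hk], rfl⟩
    cases v with
    | inl a =>
      obtain ⟨p, hp, hp1⟩ := t4 a (Finset.mem_univ a)
      exact key p hp (Sum.inl a) (by rw [hp1]; exact Sym2.mem_mk_left _ _)
    | inr b =>
      obtain ⟨p, hp, hp1⟩ := t5 b (Finset.mem_univ b)
      exact key p hp (Sum.inr b) (by rw [hp1]; exact Sym2.mem_mk_right _ _)
end

section
/- For every r ≥ 1 and every ε > 0 there exist δ > 0 and n₀ such that for all n ≥ n₀ the following holds: if K_{n,n} is r-locally edge coloured and H is a spanning subgraph of K_{n,n} obtained by deleting at most δ·n² edges, then all but at most ε·n vertices of H can be covered by at most (2r-1)·r pairwise vertex-disjoint monochromatic connected matchings of H, where each matching is connected in H. -/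
open SimpleGraph Set

variable {V : Type*}

lemma exists_maximal_matching {V : Type*} [Finite V] (G : SimpleGraph V) (T : Set V) :
    ∃ M : Set (Sym2 V),
      (∀ e ∈ M, ∃ a b, e = s(a,b) ∧ G.Adj a b ∧ a ∈ T ∧ b ∈ T) ∧
      (∀ e ∈ M, ∀ f ∈ M, e ≠ f → ∀ v, v ∈ e → v ∉ f) ∧
      (∀ a b, G.Adj a b → a ∈ T → b ∈ T → a ∉ matchSupp M → b ∉ matchSupp M → False) := by
  classical
  set C : Set (Set (Sym2 V)) := {M | (∀ e ∈ M, ∃ a b, e = s(a,b) ∧ G.Adj a b ∧ a ∈ T ∧ b ∈ T) ∧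
      (∀ e ∈ M, ∀ f ∈ M, e ≠ f → ∀ v, v ∈ e → v ∉ f)} with hC
  have hfin : C.Finite := Set.toFinite _
  have hne : C.Nonempty := ⟨∅, by simp [hC]⟩
  obtain ⟨M, hM, hmax⟩ := Set.Finite.exists_maximalFor id C hfin hne
  refine ⟨M, hM.1, hM.2, ?_⟩
  intro a b hab haT hbT haM hbM
  have hane : a ∉ matchSupp M := haM
  have hnew : M ∪ {s(a,b)} ∈ C := by
    constructor
    · intro e he
      rw [Set.mem_union] at he
      rcases he with he | he
      · exact hM.1 e he
      · exact ⟨a, b, by simpa using he, hab, haT, hbT⟩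
    · intro e he f hf hef v hv
      rw [Set.mem_union] at he hf
      rcases he with he | he <;> rcases hf with hf | hf
      · exact hM.2 e he f hf hef v hv
      · simp only [Set.mem_singleton_iff] at hf; subst hf
        intro hvf
        rcases (Sym2.mem_iff).1 hvf with rfl | rfl
        · exact haM ⟨e, he, hv⟩
        · exact hbM ⟨e, he, hv⟩
      · simp only [Set.mem_singleton_iff] at he; subst he
        intro hvf
        rcases (Sym2.mem_iff).1 hv with rfl | rfl
        · exact haM ⟨f, hf, hvf⟩
        · exact hbM ⟨f, hf, hvf⟩
      · simp only [Set.mem_singleton_iff] at he hf; subst he; subst hf; exact absurd rfl hef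
  have h1 : M ⊆ M ∪ {s(a,b)} := Set.subset_union_left
  have := le_antisymm h1 (hmax hnew h1)
  have he : s(a,b) ∈ M := by
    rw [show M = M ∪ {s(a,b)} from this]; exact Or.inr rfl
  exact haM ⟨s(a,b), he, by simp⟩

-- enumeration of a small finite set of naturals
lemma subset_image_of_ncard_le {S : Set ℕ} (hS : S.Finite) {r : ℕ} (h : S.ncard ≤ r) :
    ∃ g : ℕ → ℕ, S ⊆ g '' (Set.Iio r) := by
  classical
  set l := hS.toFinset.toList with hl
  refine ⟨fun k => l.getD k 0, ?_⟩
  intro s hs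
  have hmem : s ∈ l := by simp [hl, hS.mem_toFinset, hs]
  obtain ⟨i, hi, hget⟩ := List.getElem_of_mem hmem
  have hlen : l.length = S.ncard := by
    rw [hl, Finset.length_toList, Set.ncard_eq_toFinset_card S hS]
  refine ⟨i, ?_, ?_⟩
  · have : i < S.ncard := hlen ▸ hi
    exact lt_of_lt_of_le this h
  · show l.getD i 0 = s
    rw [List.getD_eq_getElem?_getD, List.getElem?_eq_getElem hi]
    simpa using hget

-- complete bipartite edge shape
lemma kedge_form {n : ℕ} {e : Sym2 (Fin n ⊕ Fin n)}
    (he : e ∈ (completeBipartiteGraph (Fin n) (Fin n)).edgeSet) :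
    ∃ a b, e = s(Sum.inl a, Sum.inr b) := by
  induction e with
  | _ x y =>
    simp only [SimpleGraph.mem_edgeSet, completeBipartiteGraph_adj] at he
    rcases he with ⟨h1, h2⟩ | ⟨h1, h2⟩
    · obtain ⟨a, rfl⟩ := Sum.isLeft_iff.1 h1
      obtain ⟨b, rfl⟩ := Sum.isRight_iff.1 h2
      exact ⟨a, b, rfl⟩
    · obtain ⟨b, rfl⟩ := Sum.isRight_iff.1 h1
      obtain ⟨a, rfl⟩ := Sum.isLeft_iff.1 h2
      exact ⟨a, b, Sym2.eq_swap⟩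

-- first edge of a walk
lemma reachable_ne_exists_adj {V : Type*} {G : SimpleGraph V} {u a : V}
    (h : G.Reachable u a) (hne : u ≠ a) : ∃ w, G.Adj u w := by
  obtain ⟨p⟩ := h
  cases p with
  | nil => exact absurd rfl hne
  | cons h' p' => exact ⟨_, h'⟩

lemma supp_card_eq {n : ℕ} (hn : 0 < n) (M : Set (Sym2 (Fin n ⊕ Fin n)))
    (hK : ∀ e ∈ M, ∃ a b, e = s(Sum.inl a, Sum.inr b))
    (hdisj : ∀ e ∈ M, ∀ f ∈ M, e ≠ f → ∀ v, v ∈ e → v ∉ f) :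
    (matchSupp M ∩ Set.range Sum.inl).ncard = (matchSupp M ∩ Set.range Sum.inr).ncard := by
  classical
  have : Inhabited (Fin n) := ⟨⟨0, hn⟩⟩
  set FL : Sym2 (Fin n ⊕ Fin n) → (Fin n ⊕ Fin n) := fun e =>
    if h : ∃ a b, e = s(Sum.inl a, Sum.inr b) then Sum.inl h.choose else Sum.inl default with hFL
  set FR : Sym2 (Fin n ⊕ Fin n) → (Fin n ⊕ Fin n) := fun e =>
    if h : ∃ a b, e = s(Sum.inl a, Sum.inr b) then Sum.inr h.choose_spec.choose else Sum.inr default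
    with hFR
  have key : ∀ e ∈ M, ∃ a b, e = s(Sum.inl a, Sum.inr b) ∧ FL e = Sum.inl a ∧ FR e = Sum.inr b := by
    intro e he
    have h := hK e he
    refine ⟨h.choose, h.choose_spec.choose, h.choose_spec.choose_spec, ?_, ?_⟩
    · simp only [hFL]; rw [dif_pos h]
    · simp only [hFR]; rw [dif_pos h]
  have hFLmem : ∀ e ∈ M, FL e ∈ e := by
    intro e he
    obtain ⟨a, b, heq, h1, _⟩ := key e he
    rw [h1, heq]; simp
  have hFRmem : ∀ e ∈ M, FR e ∈ e := by
    intro e he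
    obtain ⟨a, b, heq, _, h2⟩ := key e he
    rw [h2, heq]; simp
  have hinj : ∀ (F : Sym2 (Fin n ⊕ Fin n) → (Fin n ⊕ Fin n)),
      (∀ e ∈ M, F e ∈ e) → Set.InjOn F M := by
    intro F hF e he f hf hef
    by_contra hne
    exact hdisj e he f hf hne (F e) (hF e he) (hef ▸ hF f hf)
  have himL : FL '' M = matchSupp M ∩ Set.range Sum.inl := by
    apply Set.Subset.antisymm
    · rintro v ⟨e, he, rfl⟩
      obtain ⟨a, b, heq, h1, _⟩ := key e he
      exact ⟨⟨e, he, hFLmem e he⟩, ⟨a, h1.symm⟩⟩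
    · rintro v ⟨⟨e, he, hv⟩, ⟨a, rfl⟩⟩
      obtain ⟨a', b', heq, h1, _⟩ := key e he
      refine ⟨e, he, ?_⟩
      rw [h1]
      rw [heq] at hv
      rcases Sym2.mem_iff.1 hv with h2 | h2
      · exact h2.symm
      · simp at h2
  have himR : FR '' M = matchSupp M ∩ Set.range Sum.inr := by
    apply Set.Subset.antisymm
    · rintro v ⟨e, he, rfl⟩
      obtain ⟨a, b, heq, _, h2⟩ := key e he
      exact ⟨⟨e, he, hFRmem e he⟩, ⟨b, h2.symm⟩⟩
    · rintro v ⟨⟨e, he, hv⟩, ⟨b, rfl⟩⟩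
      obtain ⟨a', b', heq, _, h2⟩ := key e he
      refine ⟨e, he, ?_⟩
      rw [h2]
      rw [heq] at hv
      rcases Sym2.mem_iff.1 hv with h1 | h1
      · simp at h1
      · exact h1.symm
  rw [← himL, ← himR, Set.ncard_image_of_injOn (hinj FL hFLmem),
    Set.ncard_image_of_injOn (hinj FR hFRmem)]

lemma card_bad_le {V : Type*} [Fintype V] (G : SimpleGraph V) (t : ℕ) :
    {v | t ≤ (G.neighborSet v).ncard}.ncard * t ≤ 2 * G.edgeSet.ncard := by
  classical
  set B := Finset.univ.filter (fun v => t ≤ (G.neighborSet v).ncard) with hB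
  have h1 : {v | t ≤ (G.neighborSet v).ncard} = ↑B := by
    ext v; simp [hB]
  rw [h1, Set.ncard_coe_finset]
  have h2 : B.card * t = ∑ _v ∈ B, t := by simp [mul_comm]
  rw [h2]
  have h3 : ∑ _v ∈ B, t ≤ ∑ v ∈ B, (G.neighborSet v).ncard := by
    apply Finset.sum_le_sum
    intro v hv
    simpa [hB] using (Finset.mem_filter.1 hv).2
  have h4 : ∑ v ∈ B, (G.neighborSet v).ncard ≤ ∑ v : V, (G.neighborSet v).ncard :=
    Finset.sum_le_sum_of_subset (Finset.subset_univ B)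
  have h5 : ∀ v : V, (G.neighborSet v).ncard = G.degree v := by
    intro v
    rw [← SimpleGraph.card_neighborSet_eq_degree, Set.ncard_eq_toFinset_card']
    simp
  have h6 : ∑ v : V, (G.neighborSet v).ncard = 2 * G.edgeFinset.card := by
    rw [← SimpleGraph.sum_degrees_eq_twice_card_edges]
    exact Finset.sum_congr rfl (fun v _ => h5 v)
  have h7 : G.edgeFinset.card = G.edgeSet.ncard := by
    rw [Set.ncard_eq_toFinset_card']
    congr
  omega

lemma matchSupp_empty {V : Type*} : matchSupp (∅ : Set (Sym2 V)) = ∅ := by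
  ext v; simp [matchSupp]

lemma isMonoConnMatching_empty {V : Type*} (G : SimpleGraph V) (c : Sym2 V → ℕ) (x : ℕ) :
    IsMonoConnMatching G c x (∅ : Set (Sym2 V)) := by
  refine ⟨?_, ?_, ?_⟩ <;> intro e he <;> exact absurd he (Set.notMem_empty e)


/-- Stage processing: sequential maximal matchings in the colour components of `ustar`. -/
lemma stage_lemma {V : Type*} [Finite V] (H : SimpleGraph V) (c : Sym2 V → ℕ)
    (ustar : V) (g : ℕ → ℕ) (A : Set V) (m : ℕ) :
    ∃ N : ℕ → Set (Sym2 V),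
      (∀ k, IsMonoConnMatching H c (g k) (N k)) ∧
      (∀ k, ∀ v ∈ matchSupp (N k), v ∈ A ∧ (colourGraph H c (g k)).Reachable ustar v) ∧
      (∀ k k', k ≠ k' → Disjoint (matchSupp (N k)) (matchSupp (N k'))) ∧
      (∀ k < m, ∀ a b, (colourGraph H c (g k)).Adj a b →
        (colourGraph H c (g k)).Reachable ustar a →
        a ∈ A → b ∈ A → (∀ k' < m, a ∉ matchSupp (N k')) → (∀ k' < m, b ∉ matchSupp (N k')) →
        False) ∧
      (∀ k, m ≤ k → N k = ∅) := by
  induction m with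
  | zero =>
    refine ⟨fun _ => ∅, fun k => isMonoConnMatching_empty H c (g k), ?_, ?_, ?_, ?_⟩
    · intro k v hv; rw [matchSupp_empty] at hv; exact absurd hv (Set.notMem_empty v)
    · intro k k' _; rw [matchSupp_empty]; exact disjoint_bot_left
    · intro k hk; omega
    · intro k _; rfl
  | succ m ih =>
    obtain ⟨N, h1, h2, h3, h4, h5⟩ := ih
    obtain ⟨P, hP1, hP2, hP3⟩ := exists_maximal_matching (colourGraph H c (g m))
      (A ∩ {v | (colourGraph H c (g m)).Reachable ustar v} ∩ {v | ∀ k < m, v ∉ matchSupp (N k)})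
    set N' : ℕ → Set (Sym2 V) := fun k => if k = m then P else N k with hN'
    have hsuppP : ∀ v ∈ matchSupp P,
        v ∈ A ∧ (colourGraph H c (g m)).Reachable ustar v ∧ ∀ k < m, v ∉ matchSupp (N k) := by
      rintro v ⟨e, he, hv⟩
      obtain ⟨a, b, rfl, hadj, haT, hbT⟩ := hP1 e he
      rcases Sym2.mem_iff.1 hv with rfl | rfl
      · exact ⟨haT.1.1, haT.1.2, haT.2⟩
      · exact ⟨hbT.1.1, hbT.1.2, hbT.2⟩
    refine ⟨N', ?_, ?_, ?_, ?_, ?_⟩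
    · intro k
      by_cases hk : k = m
      · rw [hk]
        simp only [hN', if_pos rfl]
        refine ⟨?_, hP2, ?_⟩
        · intro e he
          obtain ⟨a, b, rfl, hadj, _, _⟩ := hP1 e he
          exact ⟨hadj.1, hadj.2⟩
        · intro e he f hf x y hx hy
          have hxr : (colourGraph H c (g m)).Reachable ustar x :=
            (hsuppP x ⟨e, he, hx⟩).2.1
          have hyr : (colourGraph H c (g m)).Reachable ustar y :=
            (hsuppP y ⟨f, hf, hy⟩).2.1
          exact hxr.symm.trans hyr
      · simp only [hN', if_neg hk]; exact h1 k
    · intro k v hv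
      by_cases hk : k = m
      · rw [hk]
        rw [hk] at hv
        simp only [hN', if_pos rfl] at hv
        exact ⟨(hsuppP v hv).1, (hsuppP v hv).2.1⟩
      · simp only [hN', if_neg hk] at hv
        exact h2 k v hv
    · intro k k' hkk'
      rcases eq_or_ne k m with rfl | hk
      · rw [Set.disjoint_left]
        intro v hv hv'
        simp only [hN', if_pos rfl] at hv
        simp only [hN', if_neg (Ne.symm hkk')] at hv'
        rcases Nat.lt_or_ge k' k with h | h
        · exact (hsuppP v hv).2.2 k' h hv'
        · rw [h5 k' (by omega), matchSupp_empty] at hv'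
          exact absurd hv' (Set.notMem_empty v)
      · rcases eq_or_ne k' m with rfl | hk'
        · rw [Set.disjoint_left]
          intro v hv hv'
          simp only [hN', if_neg hk] at hv
          simp only [hN', if_pos rfl] at hv'
          rcases Nat.lt_or_ge k k' with h | h
          · exact (hsuppP v hv').2.2 k h hv
          · rw [h5 k (by omega), matchSupp_empty] at hv
            exact absurd hv (Set.notMem_empty v)
        · simp only [hN', if_neg hk, if_neg hk']
          exact h3 k k' hkk'
    · intro k hk a b hadj hreach haA hbA hna hnb
      have hnaN : ∀ k' < m, a ∉ matchSupp (N k') := by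
        intro k' hk'
        have := hna k' (Nat.lt_succ_of_lt hk')
        simpa only [hN', if_neg (Nat.ne_of_lt hk')] using this
      have hnbN : ∀ k' < m, b ∉ matchSupp (N k') := by
        intro k' hk'
        have := hnb k' (Nat.lt_succ_of_lt hk')
        simpa only [hN', if_neg (Nat.ne_of_lt hk')] using this
      rcases Nat.lt_succ_iff_lt_or_eq.1 hk with hk | rfl
      · exact h4 k hk a b hadj hreach haA hbA hnaN hnbN
      · have haP : a ∉ matchSupp P := by
          have := hna k (Nat.lt_succ_self k)
          simpa only [hN', if_pos rfl] using this
        have hbP : b ∉ matchSupp P := by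
          have := hnb k (Nat.lt_succ_self k)
          simpa only [hN', if_pos rfl] using this
        exact hP3 a b hadj ⟨⟨haA, hreach⟩, hnaN⟩ ⟨⟨hbA, hreach.trans hadj.reachable⟩, hnbN⟩ haP hbP
    · intro k hk
      simp only [hN', if_neg (by omega : k ≠ m)]
      exact h5 k (by omega)

def CovSet {V : Type*} (r : ℕ) (M : ℕ → ℕ → Set (Sym2 V)) (j : ℕ) : Set V :=
  {v | ∃ i, i < j ∧ ∃ k, k < r ∧ v ∈ matchSupp (M i k)}

structure MInv {n : ℕ} (r : ℕ) (c : Sym2 (Fin n ⊕ Fin n) → ℕ) (H : SimpleGraph (Fin n ⊕ Fin n))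
    (Bad : Set (Fin n ⊕ Fin n)) (j : ℕ) where
  u : ℕ → Fin n ⊕ Fin n
  M : ℕ → ℕ → Set (Sym2 (Fin n ⊕ Fin n))
  col : ℕ → ℕ → ℕ
  mono : ∀ i < j, ∀ k < r, IsMonoConnMatching H c (col i k) (M i k)
  disj : ∀ i < j, ∀ k < r, ∀ i' < j, ∀ k' < r, ¬(i = i' ∧ k = k') →
    Disjoint (matchSupp (M i k)) (matchSupp (M i' k'))
  fociL : ∀ i < j, ∃ a, u i = Sum.inl a
  fociGood : ∀ i < j, u i ∉ Bad
  fociUncov : ∀ i < j, u i ∉ CovSet r M j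
  p3 : ∀ a b, a ∉ CovSet r M j → (∀ i < j, a ≠ u i) → b ∉ CovSet r M j → (∀ i < j, b ≠ u i) →
    H.Adj a b → ∀ i < j, ¬ (colourGraph H c (c s(a, b))).Reachable (u i) a
  p4 : ∀ i < j, ∀ i' < j, i ≠ i' → ∀ w, w ∉ CovSet r M j → (∀ i'' < j, w ≠ u i'') →
    H.Adj (u i) w → H.Adj (u i') w → c s(u i, w) ≠ c s(u i', w)

lemma inv_step {n r : ℕ} {c : Sym2 (Fin n ⊕ Fin n) → ℕ} {H : SimpleGraph (Fin n ⊕ Fin n)}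
    {Bad : Set (Fin n ⊕ Fin n)}
    (hH : H ≤ completeBipartiteGraph (Fin n) (Fin n))
    (hloc : LocalColouring (completeBipartiteGraph (Fin n) (Fin n)) c r)
    {j : ℕ} (I : MInv r c H Bad j) (ustar : Fin n ⊕ Fin n)
    (hL : ∃ a, ustar = Sum.inl a) (hGood : ustar ∉ Bad)
    (hUncov : ustar ∉ CovSet r I.M j) (hFresh : ∀ i < j, ustar ≠ I.u i) :
    ∃ J : MInv r c H Bad (j + 1),
      (∀ i < j, J.u i = I.u i) ∧ (J.u j = ustar) ∧
      (∀ i < j, ∀ k, J.M i k = I.M i k) ∧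
      CovSet r I.M j ⊆ CovSet r J.M (j+1) := by
  classical
  set CS : Set ℕ := {z | ∃ w, H.Adj ustar w ∧ c s(ustar, w) = z} with hCSdef
  have hCSfin : CS.Finite := by
    apply Set.Finite.subset (Set.toFinite ((fun w => c s(ustar, w)) '' Set.univ))
    rintro z ⟨w, _, hc⟩
    exact ⟨w, trivial, hc⟩
  have hKfin : {x : ℕ | ∃ w, (completeBipartiteGraph (Fin n) (Fin n)).Adj ustar w
      ∧ c s(ustar, w) = x}.Finite := by
    apply Set.Finite.subset (Set.toFinite ((fun w => c s(ustar, w)) '' Set.univ))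
    rintro z ⟨w, _, hc⟩
    exact ⟨w, trivial, hc⟩
  have hsub : CS ⊆ {x | ∃ w, (completeBipartiteGraph (Fin n) (Fin n)).Adj ustar w
      ∧ c s(ustar, w) = x} := by
    rintro z ⟨w, hw, hc⟩; exact ⟨w, hH hw, hc⟩
  have hCS : CS.ncard ≤ r :=
    le_trans (Set.ncard_le_ncard hsub hKfin) (hloc ustar)
  obtain ⟨g, hg⟩ := subset_image_of_ncard_le hCSfin hCS
  set A : Set (Fin n ⊕ Fin n) :=
    {v | v ∉ CovSet r I.M j ∧ (∀ i < j, v ≠ I.u i) ∧ v ≠ ustar} with hAdef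
  obtain ⟨N, hN1, hN2, hN3, hN4, _⟩ := stage_lemma H c ustar g A r
  obtain ⟨u', hu'j, hu'i⟩ : ∃ u' : ℕ → Fin n ⊕ Fin n, u' j = ustar ∧
      ∀ i, i ≠ j → u' i = I.u i :=
    ⟨fun i => if i = j then ustar else I.u i, by simp, fun i hi => by simp [hi]⟩
  obtain ⟨M', hM'j, hM'i⟩ : ∃ M' : ℕ → ℕ → Set (Sym2 (Fin n ⊕ Fin n)),
      (∀ k, M' j k = N k) ∧ ∀ i, i ≠ j → ∀ k, M' i k = I.M i k :=
    ⟨fun i k => if i = j then N k else I.M i k, fun k => by simp, fun i hi k => by simp [hi]⟩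
  obtain ⟨col', hcol'j, hcol'i⟩ : ∃ col' : ℕ → ℕ → ℕ,
      (∀ k, col' j k = g k) ∧ ∀ i, i ≠ j → ∀ k, col' i k = I.col i k :=
    ⟨fun i k => if i = j then g k else I.col i k, fun k => by simp, fun i hi k => by simp [hi]⟩
  have hCov : CovSet r M' (j+1) = CovSet r I.M j ∪ {v | ∃ k, k < r ∧ v ∈ matchSupp (N k)} := by
    ext v
    constructor
    · rintro ⟨i, hi, k, hk, hv⟩
      by_cases hij : i = j
      · right; refine ⟨k, hk, ?_⟩; rw [hij, hM'j] at hv; exact hv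
      · left; exact ⟨i, by omega, k, hk, by rwa [hM'i i hij] at hv⟩
    · rintro (⟨i, hi, k, hk, hv⟩ | ⟨k, hk, hv⟩)
      · exact ⟨i, by omega, k, hk, by rw [hM'i i (by omega)]; exact hv⟩
      · exact ⟨j, by omega, k, hk, by rw [hM'j]; exact hv⟩
  have hnotmem : ∀ v, v ∉ CovSet r M' (j+1) →
      v ∉ CovSet r I.M j ∧ ∀ k, k < r → v ∉ matchSupp (N k) := by
    intro v hv
    rw [hCov] at hv
    exact ⟨fun h => hv (Set.mem_union_left _ h),
      fun k hk h => hv (Set.mem_union_right _ ⟨k, hk, h⟩)⟩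
  refine ⟨⟨u', M', col', ?_, ?_, ?_, ?_, ?_, ?_, ?_⟩, ?_, ?_, ?_, ?_⟩
  -- mono
  · intro i hi k hk
    by_cases hij : i = j
    · rw [hij, hM'j, hcol'j]; exact hN1 k
    · rw [hM'i i hij, hcol'i i hij]; exact I.mono i (by omega) k hk
  -- disj
  · intro i hi k hk i' hi' k' hk' hne
    by_cases hij : i = j <;> by_cases hij' : i' = j
    · rw [hij, hij', hM'j, hM'j]
      exact hN3 k k' (by rw [hij, hij'] at hne; tauto)
    · rw [hij, hM'j, hM'i i' hij']
      rw [Set.disjoint_left]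
      intro v hv hv'
      exact ((hN2 k v hv).1).1 ⟨i', by omega, k', hk', hv'⟩
    · rw [hij', hM'j, hM'i i hij]
      rw [Set.disjoint_right]
      intro v hv hv'
      exact ((hN2 k' v hv).1).1 ⟨i, by omega, k, hk, hv'⟩
    · rw [hM'i i hij, hM'i i' hij']
      exact I.disj i (by omega) k hk i' (by omega) k' hk' hne
  -- fociL
  · intro i hi
    by_cases hij : i = j
    · rw [hij, hu'j]; exact hL
    · rw [hu'i i hij]; exact I.fociL i (by omega)
  -- fociGood
  · intro i hi
    by_cases hij : i = j
    · rw [hij, hu'j]; exact hGood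
    · rw [hu'i i hij]; exact I.fociGood i (by omega)
  -- fociUncov
  · intro i hi hmem
    rw [hCov] at hmem
    by_cases hij : i = j
    · rw [hij, hu'j] at hmem
      rcases hmem with hmem | ⟨k, hk, hmem⟩
      · exact hUncov hmem
      · exact ((hN2 k ustar hmem).1).2.2 rfl
    · rw [hu'i i hij] at hmem
      rcases hmem with hmem | ⟨k, hk, hmem⟩
      · exact I.fociUncov i (by omega) hmem
      · exact ((hN2 k _ hmem).1).2.1 i (by omega) rfl
  -- p3
  · intro a b ha hafoci hb hbfoci hadj i hi hreach
    obtain ⟨ha1, ha2⟩ := hnotmem a ha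
    obtain ⟨hb1, hb2⟩ := hnotmem b hb
    have hafoci' : ∀ i' < j, a ≠ I.u i' := by
      intro i' hi'
      have := hafoci i' (by omega)
      rwa [hu'i i' (by omega)] at this
    have hbfoci' : ∀ i' < j, b ≠ I.u i' := by
      intro i' hi'
      have := hbfoci i' (by omega)
      rwa [hu'i i' (by omega)] at this
    have hane : a ≠ ustar := by
      have := hafoci j (by omega)
      rwa [hu'j] at this
    have hbne : b ≠ ustar := by
      have := hbfoci j (by omega)
      rwa [hu'j] at this
    by_cases hij : i = j
    · rw [hij, hu'j] at hreach
      obtain ⟨w', hadj'⟩ := reachable_ne_exists_adj hreach (Ne.symm hane)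
      have hzCS : c s(a, b) ∈ CS := ⟨w', hadj'.1, hadj'.2⟩
      obtain ⟨k, hk, hgk⟩ := hg hzCS
      refine hN4 k hk a b ?_ ?_ ?_ ?_ ?_ ?_
      · exact ⟨hadj, by rw [hgk]⟩
      · rw [hgk]; exact hreach
      · exact ⟨ha1, hafoci', hane⟩
      · exact ⟨hb1, hbfoci', hbne⟩
      · exact ha2
      · exact hb2
    · rw [hu'i i hij] at hreach
      exact I.p3 a b ha1 hafoci' hb1 hbfoci' hadj i (by omega) hreach
  -- p4
  · intro i hi i' hi' hne w hw hwfoci hadj1 hadj2 heq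
    obtain ⟨hw1, _⟩ := hnotmem w hw
    have hwfoci' : ∀ i'' < j, w ≠ I.u i'' := by
      intro i'' hi''
      have := hwfoci i'' (by omega)
      rwa [hu'i i'' (by omega)] at this
    have hwne : w ≠ ustar := by
      have := hwfoci j (by omega)
      rwa [hu'j] at this
    by_cases hij : i = j <;> by_cases hij' : i' = j
    · exact hne (hij.trans hij'.symm)
    · rw [hij, hu'j] at hadj1 heq
      rw [hu'i i' hij'] at hadj2 heq
      have hreach : (colourGraph H c (c s(ustar, w))).Reachable (I.u i') ustar := by
        have e1 : (colourGraph H c (c s(ustar, w))).Adj (I.u i') w := ⟨hadj2, heq.symm⟩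
        have e2 : (colourGraph H c (c s(ustar, w))).Adj w ustar :=
          ⟨hadj1.symm, by rw [Sym2.eq_swap]⟩
        exact e1.reachable.trans e2.reachable
      exact I.p3 ustar w hUncov hFresh hw1 hwfoci' hadj1 i' (by omega) hreach
    · rw [hij', hu'j] at hadj2 heq
      rw [hu'i i hij] at hadj1 heq
      have hreach : (colourGraph H c (c s(ustar, w))).Reachable (I.u i) ustar := by
        have e1 : (colourGraph H c (c s(ustar, w))).Adj (I.u i) w := ⟨hadj1, heq⟩
        have e2 : (colourGraph H c (c s(ustar, w))).Adj w ustar :=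
          ⟨hadj2.symm, by rw [Sym2.eq_swap]⟩
        exact e1.reachable.trans e2.reachable
      exact I.p3 ustar w hUncov hFresh hw1 hwfoci' hadj2 i (by omega) hreach
    · rw [hu'i i hij] at hadj1 heq
      rw [hu'i i' hij'] at hadj2 heq
      exact I.p4 i (by omega) i' (by omega) hne w hw1 hwfoci' hadj1 hadj2 heq
  -- side conditions
  · intro i hi; exact hu'i i (by omega)
  · exact hu'j
  · intro i hi k; exact hM'i i (by omega) k
  · intro v hv; show v ∈ CovSet r M' (j+1); rw [hCov]; exact Or.inl hv

lemma ncard_bUnion_le {α : Type*} [Finite α] (f : ℕ → Set α) :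
    ∀ m, {v | ∃ i, i < m ∧ v ∈ f i}.ncard ≤ ∑ i ∈ Finset.range m, (f i).ncard := by
  intro m
  induction m with
  | zero => simp
  | succ m ih =>
    have h : {v | ∃ i, i < m + 1 ∧ v ∈ f i} = {v | ∃ i, i < m ∧ v ∈ f i} ∪ f m := by
      ext v
      constructor
      · rintro ⟨i, hi, hv⟩
        rcases Nat.lt_succ_iff_lt_or_eq.1 hi with h | rfl
        · exact Or.inl ⟨i, h, hv⟩
        · exact Or.inr hv
      · rintro (⟨i, hi, hv⟩ | hv)
        · exact ⟨i, by omega, hv⟩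
        · exact ⟨m, by omega, hv⟩
    rw [h, Finset.sum_range_succ]
    exact le_trans (Set.ncard_union_le _ _) (by omega)

/-- Packaging a partial run into the final matching family. -/
lemma package {n r : ℕ} (hr : 1 ≤ r) {c : Sym2 (Fin n ⊕ Fin n) → ℕ}
    {H : SimpleGraph (Fin n ⊕ Fin n)} {Bad : Set (Fin n ⊕ Fin n)} {j : ℕ} (hj : j ≤ r)
    (I : MInv r c H Bad j) :
    ∃ (M' : Fin ((2*r-1)*r) → Set (Sym2 (Fin n ⊕ Fin n))) (col' : Fin ((2*r-1)*r) → ℕ),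
      (∀ i, IsMonoConnMatching H c (col' i) (M' i)) ∧
      (∀ i i', i ≠ i' → Disjoint (matchSupp (M' i)) (matchSupp (M' i'))) ∧
      {v | ∀ i, v ∉ matchSupp (M' i)} = {v | v ∉ CovSet r I.M j} := by
  classical
  obtain ⟨M', hM'lt, hM'ge⟩ : ∃ M' : Fin ((2*r-1)*r) → Set (Sym2 (Fin n ⊕ Fin n)),
      (∀ p : Fin ((2*r-1)*r), (p:ℕ) < j*r → M' p = I.M ((p:ℕ)/r) ((p:ℕ)%r)) ∧
      (∀ p : Fin ((2*r-1)*r), ¬((p:ℕ) < j*r) → M' p = ∅) :=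
    ⟨fun p => if (p:ℕ) < j*r then I.M ((p:ℕ)/r) ((p:ℕ)%r) else ∅,
      fun p hp => by simp [hp], fun p hp => by simp [hp]⟩
  obtain ⟨col', hcol'lt⟩ : ∃ col' : Fin ((2*r-1)*r) → ℕ,
      (∀ p : Fin ((2*r-1)*r), (p:ℕ) < j*r → col' p = I.col ((p:ℕ)/r) ((p:ℕ)%r)) :=
    ⟨fun p => if (p:ℕ) < j*r then I.col ((p:ℕ)/r) ((p:ℕ)%r) else 0, fun p hp => by simp [hp]⟩
  have hrpos : 0 < r := hr
  have hdivlt : ∀ p : ℕ, p < j*r → p / r < j ∧ p % r < r := by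
    intro p hp
    constructor
    · exact Nat.div_lt_iff_lt_mul hrpos |>.2 (by rw [mul_comm] at hp ⊢; exact hp)
    · exact Nat.mod_lt _ hrpos
  refine ⟨M', col', ?_, ?_, ?_⟩
  · intro p
    by_cases hp : (p:ℕ) < j*r
    · rw [hM'lt p hp, hcol'lt p hp]
      exact I.mono _ (hdivlt p hp).1 _ (hdivlt p hp).2
    · rw [hM'ge p hp]
      exact isMonoConnMatching_empty H c _
  · intro p p' hne
    by_cases hp : (p:ℕ) < j*r <;> by_cases hp' : (p':ℕ) < j*r
    · rw [hM'lt p hp, hM'lt p' hp']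
      refine I.disj _ (hdivlt p hp).1 _ (hdivlt p hp).2 _ (hdivlt p' hp').1 _ (hdivlt p' hp').2 ?_
      rintro ⟨h1, h2⟩
      apply hne
      have : (p:ℕ) = (p':ℕ) := by
        have e1 := Nat.div_add_mod (p:ℕ) r
        have e2 := Nat.div_add_mod (p':ℕ) r
        rw [h1, h2] at e1
        omega
      exact Fin.ext this
    · rw [hM'ge p' hp', matchSupp_empty]; exact disjoint_bot_right
    · rw [hM'ge p hp, matchSupp_empty]; exact disjoint_bot_left
    · rw [hM'ge p hp, matchSupp_empty]; exact disjoint_bot_left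
  · ext v
    simp only [Set.mem_setOf_eq]
    constructor
    · intro hv hmem
      obtain ⟨i, hi, k, hk, hvm⟩ := hmem
      have hlt : k + i * r < j * r := by
        have : k + i * r < (i+1) * r := by ring_nf; omega
        have h2 : (i+1) * r ≤ j * r := Nat.mul_le_mul_right r (by omega)
        omega
      have hlt2 : k + i * r < (2*r-1)*r := by
        have : j * r ≤ (2*r-1)*r := Nat.mul_le_mul_right r (by omega)
        omega
      set p : Fin ((2*r-1)*r) := ⟨k + i*r, hlt2⟩ with hp
      apply hv p
      have hdiv : (k + i*r)/r = i := by
        rw [Nat.add_mul_div_right k i hrpos, Nat.div_eq_of_lt hk]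
        omega
      have hmod : (k + i*r)%r = k := by
        rw [Nat.add_mul_mod_self_right, Nat.mod_eq_of_lt hk]
      have : M' p = I.M i k := by
        rw [hM'lt p (by exact hlt)]
        show I.M ((k + i*r)/r) ((k + i*r)%r) = I.M i k
        rw [hdiv, hmod]
      rw [this]
      exact hvm
    · intro hv p hvm
      by_cases hp : (p:ℕ) < j*r
      · rw [hM'lt p hp] at hvm
        exact hv ⟨_, (hdivlt p hp).1, _, (hdivlt p hp).2, hvm⟩
      · rw [hM'ge p hp, matchSupp_empty] at hvm
        exact absurd hvm (Set.notMem_empty v)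

lemma cov_card_eq {n r j : ℕ} (hn : 0 < n) {c : Sym2 (Fin n ⊕ Fin n) → ℕ}
    {H : SimpleGraph (Fin n ⊕ Fin n)} {Bad : Set (Fin n ⊕ Fin n)}
    (hH : H ≤ completeBipartiteGraph (Fin n) (Fin n)) (I : MInv r c H Bad j) :
    (CovSet r I.M j ∩ Set.range Sum.inl).ncard = (CovSet r I.M j ∩ Set.range Sum.inr).ncard := by
  classical
  set Mall : Set (Sym2 (Fin n ⊕ Fin n)) := {e | ∃ i, i < j ∧ ∃ k, k < r ∧ e ∈ I.M i k} with hMall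
  have hsupp : matchSupp Mall = CovSet r I.M j := by
    ext v
    constructor
    · rintro ⟨e, ⟨i, hi, k, hk, he⟩, hv⟩
      exact ⟨i, hi, k, hk, e, he, hv⟩
    · rintro ⟨i, hi, k, hk, e, he, hv⟩
      exact ⟨e, ⟨i, hi, k, hk, he⟩, hv⟩
  have hK : ∀ e ∈ Mall, ∃ a b, e = s(Sum.inl a, Sum.inr b) := by
    rintro e ⟨i, hi, k, hk, he⟩
    exact kedge_form (SimpleGraph.edgeSet_mono hH ((I.mono i hi k hk).1 e he).1)
  have hdisj : ∀ e ∈ Mall, ∀ f ∈ Mall, e ≠ f → ∀ v, v ∈ e → v ∉ f := by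
    rintro e ⟨i, hi, k, hk, he⟩ f ⟨i', hi', k', hk', hf⟩ hef v hv hvf
    by_cases heq : i = i' ∧ k = k'
    · obtain ⟨rfl, rfl⟩ := heq
      exact (I.mono i hi k hk).2.1 e he f hf hef v hv hvf
    · have := I.disj i hi k hk i' hi' k' hk' heq
      rw [Set.disjoint_left] at this
      exact this ⟨e, he, hv⟩ ⟨f, hf, hvf⟩
  have := supp_card_eq hn Mall hK hdisj
  rwa [hsupp] at this

lemma uncov_card {n r j : ℕ} (hn : 0 < n) {c : Sym2 (Fin n ⊕ Fin n) → ℕ}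
    {H : SimpleGraph (Fin n ⊕ Fin n)} {Bad : Set (Fin n ⊕ Fin n)}
    (hH : H ≤ completeBipartiteGraph (Fin n) (Fin n)) (I : MInv r c H Bad j) :
    {v | v ∉ CovSet r I.M j}.ncard
      = 2 * ({v | v ∉ CovSet r I.M j} ∩ Set.range Sum.inl).ncard ∧
    ({v | v ∉ CovSet r I.M j} ∩ Set.range Sum.inl).ncard
      = ({v | v ∉ CovSet r I.M j} ∩ Set.range Sum.inr).ncard := by
  classical
  set Cov := CovSet r I.M j with hCov
  set U := {v | v ∉ Cov} with hU
  set L : Set (Fin n ⊕ Fin n) := Set.range Sum.inl with hLdef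
  set R : Set (Fin n ⊕ Fin n) := Set.range Sum.inr with hRdef
  have hLcard : L.ncard = n := by
    rw [hLdef, ← Set.image_univ, Set.ncard_image_of_injective _ Sum.inl_injective,
      Set.ncard_univ, Nat.card_eq_fintype_card, Fintype.card_fin]
  have hRcard : R.ncard = n := by
    rw [hRdef, ← Set.image_univ, Set.ncard_image_of_injective _ Sum.inr_injective,
      Set.ncard_univ, Nat.card_eq_fintype_card, Fintype.card_fin]
  have hUL : U ∩ L = L \ (Cov ∩ L) := by
    ext v
    constructor
    · rintro ⟨hv, hvL⟩; exact ⟨hvL, fun h => hv h.1⟩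
    · rintro ⟨hvL, hv⟩; exact ⟨fun h => hv ⟨h, hvL⟩, hvL⟩
  have hUR : U ∩ R = R \ (Cov ∩ R) := by
    ext v
    constructor
    · rintro ⟨hv, hvR⟩; exact ⟨hvR, fun h => hv h.1⟩
    · rintro ⟨hvR, hv⟩; exact ⟨fun h => hv ⟨h, hvR⟩, hvR⟩
  have hULcard : (U ∩ L).ncard = n - (Cov ∩ L).ncard := by
    rw [hUL, Set.ncard_diff Set.inter_subset_right, hLcard]
  have hURcard : (U ∩ R).ncard = n - (Cov ∩ R).ncard := by
    rw [hUR, Set.ncard_diff Set.inter_subset_right, hRcard]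
  have hCC := cov_card_eq hn hH I
  have heq : (U ∩ L).ncard = (U ∩ R).ncard := by
    rw [hULcard, hURcard, ← hCC]
  refine ⟨?_, heq⟩
  have hsplit : U = (U ∩ L) ∪ (U ∩ R) := by
    ext v
    constructor
    · intro hv
      cases v with
      | inl a => exact Or.inl ⟨hv, ⟨a, rfl⟩⟩
      | inr b => exact Or.inr ⟨hv, ⟨b, rfl⟩⟩
    · rintro (⟨hv, _⟩ | ⟨hv, _⟩) <;> exact hv
  have hdisj : Disjoint (U ∩ L) (U ∩ R) := by
    rw [Set.disjoint_left]
    rintro v ⟨_, a, rfl⟩ ⟨_, b, hb⟩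
    exact absurd hb (by simp)
  have huni := Set.ncard_union_eq hdisj
  conv_lhs => rw [hsplit]
  rw [huni]
  omega


lemma minv_zero {n : ℕ} (r : ℕ) (c : Sym2 (Fin n ⊕ Fin n) → ℕ) (H : SimpleGraph (Fin n ⊕ Fin n))
    (Bad : Set (Fin n ⊕ Fin n)) (hn : 0 < n) : Nonempty (MInv r c H Bad 0) :=
  ⟨⟨fun _ => Sum.inl ⟨0, hn⟩, fun _ _ => ∅, fun _ _ => 0,
    fun i hi => absurd hi (Nat.not_lt_zero i),
    fun i hi => absurd hi (Nat.not_lt_zero i),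
    fun i hi => absurd hi (Nat.not_lt_zero i),
    fun i hi => absurd hi (Nat.not_lt_zero i),
    fun i hi => absurd hi (Nat.not_lt_zero i),
    fun _ _ _ _ _ _ _ i hi => absurd hi (Nat.not_lt_zero i),
    fun i hi => absurd hi (Nat.not_lt_zero i)⟩⟩

/-- For every `r ≥ 1` and `ε > 0` there are `δ > 0` and `n₀` such
that for all `n ≥ n₀`: if `K_{n,n}` is `r`-locally coloured and `H` is obtained from
`K_{n,n}` by deleting at most `δ·n²` edges, then all but at most `ε·n` vertices of
`H` can be covered by at most `(2r-1)·r` pairwise vertex-disjoint monochromatic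
connected matchings of `H` (each connected in `H`). -/
theorem local_matching_cover_robust_bipartite (r : ℕ) (hr : 1 ≤ r) (ε : ℝ) (hε : 0 < ε) :
    ∃ (δ : ℝ) (n₀ : ℕ), 0 < δ ∧ ∀ n : ℕ, n₀ ≤ n →
      ∀ c : Sym2 (Fin n ⊕ Fin n) → ℕ,
        LocalColouring (completeBipartiteGraph (Fin n) (Fin n)) c r →
      ∀ H : SimpleGraph (Fin n ⊕ Fin n),
        H ≤ completeBipartiteGraph (Fin n) (Fin n) →
        ((((completeBipartiteGraph (Fin n) (Fin n)).edgeSet \ H.edgeSet).ncard : ℝ)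
          ≤ δ * n ^ 2) →
        ∃ (M : Fin ((2 * r - 1) * r) → Set (Sym2 (Fin n ⊕ Fin n)))
          (col : Fin ((2 * r - 1) * r) → ℕ),
          (∀ i, IsMonoConnMatching H c (col i) (M i)) ∧
          (∀ i j, i ≠ j → Disjoint (matchSupp (M i)) (matchSupp (M j))) ∧
          (({v : Fin n ⊕ Fin n | ∀ i, v ∉ matchSupp (M i)}.ncard : ℝ) ≤ ε * n) := by
  classical
  have hrR : (1:ℝ) ≤ (r:ℝ) := by exact_mod_cast hr
  set η : ℝ := ε / (8*((r:ℝ)+1)) with hηdef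
  have hηpos : 0 < η := by positivity
  refine ⟨ε^2/(128*((r:ℝ)+1)), ⌈(8*(r:ℝ))/ε⌉₊ + 1, by positivity, ?_⟩
  intro n hn c hloc H hH hdel
  have hn0 : 0 < n := by omega
  have hnR : (1:ℝ) ≤ (n:ℝ) := by exact_mod_cast hn0
  have hεn : 8 * (r:ℝ) ≤ ε * n := by
    have h1 : (8*(r:ℝ))/ε ≤ (⌈(8*(r:ℝ))/ε⌉₊ : ℝ) := Nat.le_ceil _
    have h2 : ((⌈(8*(r:ℝ))/ε⌉₊ + 1 : ℕ) : ℝ) ≤ (n:ℝ) := by exact_mod_cast hn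
    push_cast at h2
    have h3 : (8*(r:ℝ))/ε ≤ (n:ℝ) := by linarith
    have h4 := mul_le_mul_of_nonneg_right h3 hε.le
    rw [div_mul_cancel₀ _ (ne_of_gt hε)] at h4
    linarith [h4]
  set G' := completeBipartiteGraph (Fin n) (Fin n) \ H with hG'def
  set t : ℕ := ⌈η * n⌉₊ with htdef
  have hηn_le_t : η * n ≤ (t:ℝ) := Nat.le_ceil _
  have ht_lt : (t:ℝ) < η*n + 1 := Nat.ceil_lt_add_one (by positivity)
  set Bad := {v : Fin n ⊕ Fin n | t ≤ (G'.neighborSet v).ncard} with hBaddef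
  have hBadBound : ((Bad.ncard : ℕ) : ℝ) ≤ ε * n / 8 := by
    have h0 := card_bad_le G' t
    have hGE : G'.edgeSet = (completeBipartiteGraph (Fin n) (Fin n)).edgeSet \ H.edgeSet :=
      SimpleGraph.edgeSet_sdiff _ _
    have h1 : ((G'.edgeSet.ncard : ℕ) : ℝ) ≤ ε^2/(128*((r:ℝ)+1)) * (n:ℝ)^2 := by
      rw [hGE]; exact hdel
    have h2 : ((Bad.ncard : ℕ) : ℝ) * (t:ℝ) ≤ 2 * (ε^2/(128*((r:ℝ)+1)) * (n:ℝ)^2) := by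
      have : ((Bad.ncard * t : ℕ) : ℝ) ≤ ((2 * G'.edgeSet.ncard : ℕ) : ℝ) := by
        exact_mod_cast h0
      push_cast at this
      linarith
    have h3 : ((Bad.ncard : ℕ) : ℝ) * (η*n) ≤ ((Bad.ncard : ℕ) : ℝ) * (t:ℝ) :=
      mul_le_mul_of_nonneg_left hηn_le_t (Nat.cast_nonneg _)
    have hηnpos : 0 < η * n := by positivity
    have h4 : ((Bad.ncard : ℕ) : ℝ) ≤ (2 * (ε^2/(128*((r:ℝ)+1)) * (n:ℝ)^2)) / (η*n) := by
      rw [le_div_iff₀ hηnpos]; linarith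
    have h5 : (2 * (ε^2/(128*((r:ℝ)+1)) * (n:ℝ)^2)) / (η*n) = ε * n / 8 := by
      rw [hηdef]
      have hne1 : (r:ℝ)+1 ≠ 0 := by positivity
      have hne2 : (n:ℝ) ≠ 0 := by positivity
      have hne3 : ε ≠ 0 := ne_of_gt hε
      field_simp
      ring
    rw [h5] at h4
    exact h4
  have hNB : ∀ v, v ∉ Bad → ((G'.neighborSet v).ncard : ℝ) ≤ η * n := by
    intro v hv
    have hm : (G'.neighborSet v).ncard < t := by
      by_contra hc
      exact hv (by rw [hBaddef]; exact Set.mem_setOf_eq ▸ (by omega : t ≤ (G'.neighborSet v).ncard))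
    have hm2 : ((G'.neighborSet v).ncard : ℝ) + 1 ≤ (t:ℝ) := by exact_mod_cast hm
    linarith
  have hHadj : ∀ x y : Fin n ⊕ Fin n, (completeBipartiteGraph (Fin n) (Fin n)).Adj x y →
      ¬ G'.Adj x y → H.Adj x y := by
    intro x y hK hG
    rw [hG'def, SimpleGraph.sdiff_adj] at hG
    tauto
  -- the common finishing move
  have hfinish : ∀ (jj : ℕ), jj ≤ r → ∀ I : MInv r c H Bad jj,
      ((({v | v ∉ CovSet r I.M jj} ∩ Set.range Sum.inl).ncard : ℝ) ≤ (r:ℝ) + ε * n/4) →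
      ∃ (M : Fin ((2 * r - 1) * r) → Set (Sym2 (Fin n ⊕ Fin n)))
          (col : Fin ((2 * r - 1) * r) → ℕ),
          (∀ i, IsMonoConnMatching H c (col i) (M i)) ∧
          (∀ i j, i ≠ j → Disjoint (matchSupp (M i)) (matchSupp (M j))) ∧
          (({v : Fin n ⊕ Fin n | ∀ i, v ∉ matchSupp (M i)}.ncard : ℝ) ≤ ε * n) := by
    intro jj hjj I hbound
    obtain ⟨M', col', hmono, hdisj, hset⟩ := package hr hjj I
    refine ⟨M', col', hmono, hdisj, ?_⟩
    rw [hset]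
    obtain ⟨h2, _⟩ := uncov_card hn0 hH I
    have h2R : ({v | v ∉ CovSet r I.M jj}.ncard : ℝ)
        = 2 * (({v | v ∉ CovSet r I.M jj} ∩ Set.range Sum.inl).ncard : ℝ) := by
      exact_mod_cast h2
    rw [h2R]
    linarith
  -- the key induction
  have key : ∀ j, j ≤ r → (∃ jj, jj ≤ r ∧ ∃ I : MInv r c H Bad jj,
      ((({v | v ∉ CovSet r I.M jj} ∩ Set.range Sum.inl).ncard : ℝ) ≤ (r:ℝ) + ε * n/4))
      ∨ Nonempty (MInv r c H Bad j) := by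
    intro j
    induction j with
    | zero => intro _; exact Or.inr (minv_zero r c H Bad hn0)
    | succ j ih =>
      intro hj
      rcases ih (by omega) with hdone | hne
      · exact Or.inl hdone
      · obtain ⟨I⟩ := hne
        by_cases hfocus : ∃ v, v ∈ {v | v ∉ CovSet r I.M j} ∩ Set.range Sum.inl ∧
            v ∉ Bad ∧ ¬(∃ i, i < j ∧ I.u i = v)
        · obtain ⟨v, ⟨hvU, hvL⟩, hvB, hvF⟩ := hfocus
          obtain ⟨a, ha⟩ := hvL
          obtain ⟨J, -, -, -, -⟩ := inv_step hH hloc I v ⟨a, ha.symm⟩ hvB hvU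
            (fun i hi hiv => hvF ⟨i, hi, hiv.symm⟩)
          exact Or.inr ⟨J⟩
        · left
          refine ⟨j, by omega, I, ?_⟩
          push_neg at hfocus
          have hsub : {v | v ∉ CovSet r I.M j} ∩ Set.range Sum.inl
              ⊆ Bad ∪ {v | ∃ i, i < j ∧ I.u i = v} := by
            intro v hv
            by_contra hc
            rw [Set.mem_union] at hc
            push_neg at hc
            exact hc.2 (hfocus v hv hc.1)
          have hFcard : {v | ∃ i, i < j ∧ I.u i = v}.ncard ≤ j := by
            have hFim : {v | ∃ i, i < j ∧ I.u i = v} = I.u '' (Set.Iio j) := by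
              ext v
              simp only [Set.mem_setOf_eq, Set.mem_image, Set.mem_Iio]
            rw [hFim]
            have h1 : (I.u '' (Set.Iio j)).ncard ≤ (Set.Iio j).ncard :=
              Set.ncard_image_le (Set.finite_Iio j)
            have h2 : (Set.Iio j).ncard = j := by
              have : (Set.Iio j) = ↑(Finset.range j) := by ext x; simp
              rw [this, Set.ncard_coe_finset, Finset.card_range]
            omega
          have h1 : ({v | v ∉ CovSet r I.M j} ∩ Set.range Sum.inl).ncard
              ≤ Bad.ncard + j := by
            refine le_trans (Set.ncard_le_ncard hsub (Set.toFinite _)) ?_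
            exact le_trans (Set.ncard_union_le _ _) (by omega)
          have h1R : (({v | v ∉ CovSet r I.M j} ∩ Set.range Sum.inl).ncard : ℝ)
              ≤ ((Bad.ncard : ℕ) : ℝ) + (j:ℝ) := by exact_mod_cast h1
          have hjR : (j:ℝ) ≤ (r:ℝ) := by exact_mod_cast (by omega : j ≤ r)
          linarith
  rcases key r le_rfl with ⟨jj, hjj, I, hb⟩ | hne
  · exact hfinish jj hjj I hb
  · obtain ⟨I⟩ := hne
    by_cases hW : ∃ w, w ∈ {v | v ∉ CovSet r I.M r} ∧ w ∈ Set.range Sum.inr ∧ w ∉ Bad ∧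
        ∀ i, i < r → ¬ G'.Adj (I.u i) w
    · -- a good right vertex adjacent to all foci exists
      obtain ⟨w, hwU, hwR, hwB, hwN⟩ := hW
      obtain ⟨b, rfl⟩ : ∃ b, w = Sum.inr b := by
        obtain ⟨b, hb⟩ := hwR; exact ⟨b, hb.symm⟩
      have hwnotfoci : ∀ i, i < r → (Sum.inr b : Fin n ⊕ Fin n) ≠ I.u i := by
        intro i hi
        obtain ⟨ai, hai⟩ := I.fociL i hi
        rw [hai]
        simp
      have hfH : ∀ i, i < r → H.Adj (I.u i) (Sum.inr b) := by
        intro i hi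
        obtain ⟨ai, hai⟩ := I.fociL i hi
        refine hHadj _ _ ?_ (hwN i hi)
        rw [hai]; simp
      set S : Set ℕ := {x | ∃ y, (completeBipartiteGraph (Fin n) (Fin n)).Adj (Sum.inr b) y
        ∧ c s(Sum.inr b, y) = x} with hSdef
      have hSfin : S.Finite := by
        apply Set.Finite.subset (Set.toFinite ((fun y => c s(Sum.inr b, y)) '' Set.univ))
        rintro z ⟨y, _, hc⟩
        exact ⟨y, trivial, hc⟩
      have hScard : S.ncard ≤ r := hloc (Sum.inr b)
      set φ : ℕ → ℕ := fun i => c s(I.u i, Sum.inr b) with hφdef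
      have hinj : Set.InjOn φ ↑(Finset.range r) := by
        intro i hi i' hi' heq
        simp only [Finset.coe_range, Set.mem_Iio] at hi hi'
        by_contra hne
        exact I.p4 i hi i' hi' hne (Sum.inr b) hwU (fun i'' hi'' => hwnotfoci i'' hi'')
          (hfH i hi) (hfH i' hi') heq
      have himg : ↑((Finset.range r).image φ) ⊆ S := by
        intro z hz
        rw [Finset.mem_coe, Finset.mem_image] at hz
        obtain ⟨i, hi, rfl⟩ := hz
        rw [Finset.mem_range] at hi
        obtain ⟨ai, hai⟩ := I.fociL i hi
        refine ⟨I.u i, ?_, ?_⟩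
        · rw [hai]; simp
        · rw [Sym2.eq_swap]
      have hcardimg : ((Finset.range r).image φ).card = r := by
        rw [Finset.card_image_of_injOn hinj, Finset.card_range]
      have hSeq : ↑((Finset.range r).image φ) = S := by
        apply Set.eq_of_subset_of_ncard_le himg ?_ hSfin
        rw [Set.ncard_coe_finset, hcardimg]
        exact hScard
      have hclaim : {v | v ∉ CovSet r I.M r} ∩ Set.range Sum.inl
          ⊆ {v | ∃ i, i < r ∧ I.u i = v} ∪ G'.neighborSet (Sum.inr b) := by
        rintro v ⟨hvU, hvL⟩
        by_contra hc
        rw [Set.mem_union] at hc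
        push_neg at hc
        obtain ⟨hc1, hc2⟩ := hc
        obtain ⟨a, rfl⟩ : ∃ a, v = Sum.inl a := by
          obtain ⟨a, ha⟩ := hvL; exact ⟨a, ha.symm⟩
        have hKvw : (completeBipartiteGraph (Fin n) (Fin n)).Adj (Sum.inr b) (Sum.inl a) := by
          simp
        have hHvw : H.Adj (Sum.inl a) (Sum.inr b) := by
          refine (hHadj _ _ hKvw ?_).symm
          exact fun h => hc2 ((SimpleGraph.mem_neighborSet _ _ _).2 h)
        have hvnotfoci : ∀ i, i < r → (Sum.inl a : Fin n ⊕ Fin n) ≠ I.u i :=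
          fun i hi h => hc1 ⟨i, hi, h.symm⟩
        have hzS : c s(Sum.inl a, Sum.inr b) ∈ S := by
          refine ⟨Sum.inl a, hKvw, ?_⟩
          rw [Sym2.eq_swap]
        rw [← hSeq, Finset.mem_coe, Finset.mem_image] at hzS
        obtain ⟨i, hi, hφi⟩ := hzS
        rw [Finset.mem_range] at hi
        have e1 : (colourGraph H c (c s(Sum.inl a, Sum.inr b))).Adj (I.u i) (Sum.inr b) :=
          ⟨hfH i hi, hφi⟩
        have e2 : (colourGraph H c (c s(Sum.inl a, Sum.inr b))).Adj (Sum.inr b) (Sum.inl a) :=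
          ⟨hHvw.symm, by rw [Sym2.eq_swap]⟩
        exact I.p3 (Sum.inl a) (Sum.inr b) hvU hvnotfoci hwU hwnotfoci hHvw i hi
          (e1.reachable.trans e2.reachable)
      have hFcard : {v | ∃ i, i < r ∧ I.u i = v}.ncard ≤ r := by
        have hFim : {v | ∃ i, i < r ∧ I.u i = v} = I.u '' (Set.Iio r) := by
          ext v
          simp only [Set.mem_setOf_eq, Set.mem_image, Set.mem_Iio]
        rw [hFim]
        have h1 : (I.u '' (Set.Iio r)).ncard ≤ (Set.Iio r).ncard :=
          Set.ncard_image_le (Set.finite_Iio r)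
        have h2 : (Set.Iio r).ncard = r := by
          have : (Set.Iio r) = ↑(Finset.range r) := by ext x; simp
          rw [this, Set.ncard_coe_finset, Finset.card_range]
        omega
      have h1 : ({v | v ∉ CovSet r I.M r} ∩ Set.range Sum.inl).ncard
          ≤ {v | ∃ i, i < r ∧ I.u i = v}.ncard + (G'.neighborSet (Sum.inr b)).ncard :=
        le_trans (Set.ncard_le_ncard hclaim (Set.toFinite _)) (Set.ncard_union_le _ _)
      refine hfinish r le_rfl I ?_
      have h1R : (({v | v ∉ CovSet r I.M r} ∩ Set.range Sum.inl).ncard : ℝ)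
          ≤ ({v | ∃ i, i < r ∧ I.u i = v}.ncard : ℝ) + ((G'.neighborSet (Sum.inr b)).ncard : ℝ) := by
        exact_mod_cast h1
      have hFR : ({v | ∃ i, i < r ∧ I.u i = v}.ncard : ℝ) ≤ (r:ℝ) := by exact_mod_cast hFcard
      have hNBw := hNB _ hwB
      have hηn4 : η * n ≤ ε * n / 4 := by
        rw [hηdef]
        rw [div_mul_eq_mul_div, div_le_div_iff₀ (by positivity) (by norm_num : (0:ℝ) < 4)]
        nlinarith [hε.le, hnR, hrR]
      linarith
    · -- no such vertex: all of U∩R is bad or misses a focus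
      push_neg at hW
      have hsub : {v | v ∉ CovSet r I.M r} ∩ Set.range Sum.inr
          ⊆ Bad ∪ {v | ∃ i, i < r ∧ v ∈ G'.neighborSet (I.u i)} := by
        rintro w ⟨hwU, hwR⟩
        by_cases hB : w ∈ Bad
        · exact Or.inl hB
        · obtain ⟨i, hi, hadj⟩ := hW w hwU hwR hB
          exact Or.inr ⟨i, hi, (SimpleGraph.mem_neighborSet _ _ _).2 hadj⟩
      have hbu := ncard_bUnion_le (fun i => G'.neighborSet (I.u i)) r
      have h1 : ({v | v ∉ CovSet r I.M r} ∩ Set.range Sum.inr).ncard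
          ≤ Bad.ncard + {v | ∃ i, i < r ∧ v ∈ G'.neighborSet (I.u i)}.ncard :=
        le_trans (Set.ncard_le_ncard hsub (Set.toFinite _)) (Set.ncard_union_le _ _)
      have hsumR : ((∑ i ∈ Finset.range r, (G'.neighborSet (I.u i)).ncard : ℕ) : ℝ)
          ≤ (r:ℝ) * (η * n) := by
        rw [Nat.cast_sum]
        have hterm : ∀ i ∈ Finset.range r, ((G'.neighborSet (I.u i)).ncard : ℝ) ≤ η * n := by
          intro i hi
          rw [Finset.mem_range] at hi
          exact hNB _ (I.fociGood i hi)
        calc ∑ i ∈ Finset.range r, ((G'.neighborSet (I.u i)).ncard : ℝ)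
            ≤ ∑ _i ∈ Finset.range r, (η * n) := Finset.sum_le_sum hterm
          _ = (r:ℝ) * (η * n) := by rw [Finset.sum_const, Finset.card_range, nsmul_eq_mul]
      have h1R : (({v | v ∉ CovSet r I.M r} ∩ Set.range Sum.inr).ncard : ℝ)
          ≤ ((Bad.ncard : ℕ) : ℝ) + (r:ℝ) * (η * n) := by
        have hc1 : (({v | v ∉ CovSet r I.M r} ∩ Set.range Sum.inr).ncard : ℝ)
            ≤ ((Bad.ncard : ℕ) : ℝ)
              + (({v | ∃ i, i < r ∧ v ∈ G'.neighborSet (I.u i)}.ncard : ℕ) : ℝ) := by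
          exact_mod_cast h1
        have hc2 : (({v | ∃ i, i < r ∧ v ∈ G'.neighborSet (I.u i)}.ncard : ℕ) : ℝ)
            ≤ (r:ℝ) * (η * n) := le_trans (by exact_mod_cast hbu) hsumR
        linarith
      have hrη : (r:ℝ) * (η * n) ≤ ε * n / 8 := by
        rw [hηdef]
        rw [div_mul_eq_mul_div, mul_div_assoc']
        rw [div_le_div_iff₀ (by positivity) (by norm_num : (0:ℝ) < 8)]
        nlinarith [hε.le, hnR, hrR]
      obtain ⟨-, hLR⟩ := uncov_card hn0 hH I
      refine hfinish r le_rfl I ?_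
      have hLRR : (({v | v ∉ CovSet r I.M r} ∩ Set.range Sum.inl).ncard : ℝ)
          = (({v | v ∉ CovSet r I.M r} ∩ Set.range Sum.inr).ncard : ℝ) := by
        exact_mod_cast hLR
      rw [hLRR]
      linarith
end

section
/- For every ε > 0 and every integer r ≥ 1 there exists t = t(ε, r) such that for every n and every r-local edge colouring of K_{n,n}, there is a set of at most t colours such that the number of edges of K_{n,n} whose colour is not in this set is at most ε·n². -/
open SimpleGraph Set

variable {V : Type*}

/-- For every `ε > 0` and `r ≥ 1` there is `t` such that for every
`n` and every `r`-local edge colouring of `K_{n,n}`, there is a set of at most `t`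
colours such that at most `ε·n²` edges have a colour outside this set. -/
theorem local_colouring_few_dominant_colours (ε : ℝ) (hε : 0 < ε) (r : ℕ) (hr : 1 ≤ r) :
    ∃ t : ℕ, ∀ n : ℕ, ∀ c : Sym2 (Fin n ⊕ Fin n) → ℕ,
      LocalColouring (completeBipartiteGraph (Fin n) (Fin n)) c r →
      ∃ F : Finset ℕ, F.card ≤ t ∧
        (({e ∈ (completeBipartiteGraph (Fin n) (Fin n)).edgeSet | c e ∉ F}.ncard : ℝ)
          ≤ ε * n ^ 2) := by
  classical
  have hrpos : (0:ℝ) < r := by exact_mod_cast hr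
  refine ⟨Nat.ceil ((r:ℝ)^2 / ε), fun n c hc => ?_⟩
  set G := completeBipartiteGraph (Fin n) (Fin n) with hG
  have hadj : ∀ (a b : Fin n), G.Adj (Sum.inl a) (Sum.inr b) := fun a b => Or.inl ⟨rfl, rfl⟩
  -- the set of used colours
  set C : Finset ℕ :=
    Finset.image (fun p : Fin n × Fin n => c s(Sum.inl p.1, Sum.inr p.2)) Finset.univ with hC
  have hCmem : ∀ u v, G.Adj u v → c s(u, v) ∈ C := by
    rintro (a | a) (b | b) h
    · cases h <;> simp_all
    · exact Finset.mem_image.2 ⟨(a, b), Finset.mem_univ _, rfl⟩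
    · rw [Sym2.eq_swap]; exact Finset.mem_image.2 ⟨(b, a), Finset.mem_univ _, rfl⟩
    · cases h <;> simp_all
  -- right / left vertices seeing a colour
  set Rs : ℕ → Finset (Fin n) :=
    fun x => Finset.univ.filter (fun b => Sees G c (Sum.inr b) x) with hRs
  set Ls : ℕ → Finset (Fin n) :=
    fun x => Finset.univ.filter (fun a => Sees G c (Sum.inl a) x) with hLs
  -- locality: each vertex sees at most r colours within C
  have hseen : ∀ v : Fin n ⊕ Fin n, (C.filter (fun x => Sees G c v x)).card ≤ r := by
    intro v
    have hsub : {x : ℕ | ∃ w, G.Adj v w ∧ c s(v, w) = x}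
        = ↑(C.filter (fun x => Sees G c v x)) := by
      ext x
      simp only [Set.mem_setOf_eq, Finset.coe_filter, Finset.mem_filter]
      constructor
      · rintro ⟨w, hw, rfl⟩
        exact ⟨hCmem _ _ hw, ⟨w, hw, rfl⟩⟩
      · rintro ⟨-, hx⟩; exact hx
    have := hc v
    rwa [hsub, Set.ncard_coe_finset] at this
  have hRsum : ∑ x ∈ C, (Rs x).card ≤ n * r := by
    have h1 : ∑ x ∈ C, (Rs x).card
        = ∑ v : Fin n, (C.filter (fun x => Sees G c (Sum.inr v) x)).card := by
      simp only [hRs, Finset.card_filter]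
      rw [Finset.sum_comm]
    rw [h1]
    calc ∑ v : Fin n, (C.filter (fun x => Sees G c (Sum.inr v) x)).card
        ≤ ∑ _v : Fin n, r := Finset.sum_le_sum fun v _ => hseen _
      _ = n * r := by simp [mul_comm]
  have hLsum : ∑ x ∈ C, (Ls x).card ≤ n * r := by
    have h1 : ∑ x ∈ C, (Ls x).card
        = ∑ v : Fin n, (C.filter (fun x => Sees G c (Sum.inl v) x)).card := by
      simp only [hLs, Finset.card_filter]
      rw [Finset.sum_comm]
    rw [h1]
    calc ∑ v : Fin n, (C.filter (fun x => Sees G c (Sum.inl v) x)).card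
        ≤ ∑ _v : Fin n, r := Finset.sum_le_sum fun v _ => hseen _
      _ = n * r := by simp [mul_comm]
  -- the dominant colours
  set F : Finset ℕ := C.filter (fun x => ε * n ≤ (r:ℝ) * (Rs x).card) with hF
  refine ⟨F, ?_, ?_⟩
  · -- F is small
    rcases Nat.eq_zero_or_pos n with h0 | hn
    · subst h0
      have hC0 : C = ∅ := by
        rw [hC]
        simp [Finset.univ_eq_empty]
      simp [hF, hC0]
    · have key : (F.card : ℝ) * (ε * n) ≤ (r:ℝ)^2 * n := by
        calc (F.card : ℝ) * (ε * n) = ∑ _x ∈ F, ε * n := by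
              rw [Finset.sum_const, nsmul_eq_mul]
          _ ≤ ∑ x ∈ F, (r:ℝ) * (Rs x).card :=
              Finset.sum_le_sum fun x hx => (Finset.mem_filter.1 hx).2
          _ = (r:ℝ) * ∑ x ∈ F, ((Rs x).card : ℝ) := by rw [Finset.mul_sum]
          _ ≤ (r:ℝ) * ((n : ℝ) * r) := by
              refine mul_le_mul_of_nonneg_left ?_ (Nat.cast_nonneg _)
              have h2 : ∑ x ∈ F, (Rs x).card ≤ n * r :=
                (Finset.sum_le_sum_of_subset (Finset.filter_subset _ _)).trans hRsum
              exact_mod_cast h2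
          _ = (r:ℝ)^2 * n := by ring
      have hn' : (0:ℝ) < n := by exact_mod_cast hn
      have hcard : (F.card : ℝ) ≤ (r:ℝ)^2 / ε := by
        rw [le_div_iff₀ hε]
        nlinarith
      exact_mod_cast hcard.trans (Nat.le_ceil _)
  · -- few edges outside F
    set B : Finset (Fin n × Fin n) :=
      Finset.univ.filter (fun p => c s(Sum.inl p.1, Sum.inr p.2) ∉ F) with hB
    have hφinj : Function.Injective
        (fun p : Fin n × Fin n => (s(Sum.inl p.1, Sum.inr p.2) : Sym2 (Fin n ⊕ Fin n))) := by
      rintro ⟨a, b⟩ ⟨a', b'⟩ h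
      rw [Sym2.eq_iff] at h
      rcases h with ⟨h1, h2⟩ | ⟨h1, h2⟩ <;> simp_all
    have hset : {e ∈ G.edgeSet | c e ∉ F}
        = ↑(B.image (fun p : Fin n × Fin n => s(Sum.inl p.1, Sum.inr p.2))) := by
      ext e
      induction e using Sym2.ind with
      | _ u v =>
        simp only [Set.mem_setOf_eq, Finset.coe_image, Set.mem_image, Finset.mem_coe, hB,
          Finset.mem_filter, Finset.mem_univ, true_and]
        constructor
        · rintro ⟨huv, hnot⟩
          rw [SimpleGraph.mem_edgeSet] at huv
          rcases u with a | b
          · rcases v with a' | b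
            · cases huv <;> simp_all
            · exact ⟨(a, b), hnot, rfl⟩
          · rcases v with a | b'
            · rw [Sym2.eq_swap] at hnot
              exact ⟨(a, b), hnot, Sym2.eq_swap⟩
            · cases huv <;> simp_all
        · rintro ⟨⟨a, b⟩, hnot, heq⟩
          rw [← heq]
          exact ⟨G.mem_edgeSet.2 (hadj a b), hnot⟩
    have hBcard : B.card
        = ∑ x ∈ C \ F, (B.filter (fun p => c s(Sum.inl p.1, Sum.inr p.2) = x)).card :=
      Finset.card_eq_sum_card_fiberwise (fun p hp => by
        rw [Finset.mem_coe, Finset.mem_sdiff]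
        exact ⟨hCmem _ _ (hadj _ _), (Finset.mem_filter.1 hp).2⟩)
    have hfiber : ∀ x, (B.filter (fun p => c s(Sum.inl p.1, Sum.inr p.2) = x)).card
        ≤ (Ls x).card * (Rs x).card := by
      intro x
      have hsub : B.filter (fun p => c s(Sum.inl p.1, Sum.inr p.2) = x) ⊆ (Ls x) ×ˢ (Rs x) := by
        intro p hp
        rw [Finset.mem_filter] at hp
        rw [Finset.mem_product]
        refine ⟨Finset.mem_filter.2 ⟨Finset.mem_univ _, ⟨Sum.inr p.2, hadj _ _, hp.2⟩⟩,
          Finset.mem_filter.2 ⟨Finset.mem_univ _, ⟨Sum.inl p.1, (hadj _ _).symm, ?_⟩⟩⟩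
        rw [Sym2.eq_swap]; exact hp.2
      calc (B.filter (fun p => c s(Sum.inl p.1, Sum.inr p.2) = x)).card
          ≤ ((Ls x) ×ˢ (Rs x)).card := Finset.card_le_card hsub
        _ = (Ls x).card * (Rs x).card := Finset.card_product _ _
    have hRsmall : ∀ x ∈ C \ F, ((Rs x).card : ℝ) ≤ ε * n / r := by
      intro x hx
      rw [Finset.mem_sdiff] at hx
      have h2 : ¬ (ε * n ≤ (r:ℝ) * (Rs x).card) :=
        fun h => hx.2 (Finset.mem_filter.2 ⟨hx.1, h⟩)
      push_neg at h2
      rw [le_div_iff₀ hrpos]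
      nlinarith
    have hncard : ({e ∈ G.edgeSet | c e ∉ F}.ncard : ℝ) = (B.card : ℝ) := by
      rw [hset, Set.ncard_coe_finset, Finset.card_image_of_injective _ hφinj]
    rw [hncard]
    calc (B.card : ℝ)
        = ∑ x ∈ C \ F, ((B.filter (fun p => c s(Sum.inl p.1, Sum.inr p.2) = x)).card : ℝ) := by
          exact_mod_cast hBcard
      _ ≤ ∑ x ∈ C \ F, ((Ls x).card : ℝ) * ((Rs x).card : ℝ) :=
          Finset.sum_le_sum fun x _ => by exact_mod_cast hfiber x
      _ ≤ ∑ x ∈ C \ F, ((Ls x).card : ℝ) * (ε * n / r) :=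
          Finset.sum_le_sum fun x hx =>
            mul_le_mul_of_nonneg_left (hRsmall x hx) (Nat.cast_nonneg _)
      _ = (∑ x ∈ C \ F, ((Ls x).card : ℝ)) * (ε * n / r) := by rw [Finset.sum_mul]
      _ ≤ ((n : ℝ) * r) * (ε * n / r) := by
          refine mul_le_mul_of_nonneg_right ?_ (by positivity)
          have h1 : ∑ x ∈ C \ F, (Ls x).card ≤ ∑ x ∈ C, (Ls x).card :=
            Finset.sum_le_sum_of_subset Finset.sdiff_subset
          exact_mod_cast h1.trans hLsum
      _ = ε * n ^ 2 := by field_simp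
end

section
/- Let the balanced complete bipartite graph K_{n,n} have a simple 2-local edge colouring. Then the total number of colours appearing on edges is at most four. -/
open SimpleGraph Set

variable {V : Type*}

section Aux

variable {n : ℕ}

/-- The set of colours a vertex sees. -/
def seenSet (G : SimpleGraph V) (c : Sym2 V → ℕ) (v : V) : Set ℕ :=
  {x | ∃ w, G.Adj v w ∧ c s(v, w) = x}

lemma seenSet_finite [Finite V] (G : SimpleGraph V) (c : Sym2 V → ℕ) (v : V) :
    (seenSet G c v).Finite := by
  apply (Set.finite_range (fun w => c s(v, w))).subset
  rintro x ⟨w, _, rfl⟩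
  exact ⟨w, rfl⟩

lemma adjIff (u w : Fin n ⊕ Fin n) :
    (completeBipartiteGraph (Fin n) (Fin n)).Adj u w ↔ u.isLeft ≠ w.isLeft := by
  rcases u with a | a <;> rcases w with b | b <;>
    simp [completeBipartiteGraph]

lemma edgeIn (G : SimpleGraph V) (c : Sym2 V → ℕ) {u w : V} (h : G.Adj u w) :
    c s(u, w) ∈ seenSet G c u ∩ seenSet G c w :=
  ⟨⟨w, h, rfl⟩, ⟨u, h.symm, by rw [Sym2.eq_swap]⟩⟩

end Aux

/-- If `K_{n,n}` has a simple 2-local edge colouring (any two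
colours appearing on edges have vertices in common seeing both), then at most four
colours appear on edges in total. -/
theorem simple_two_local_at_most_four_colours (n : ℕ)
    (c : Sym2 (Fin n ⊕ Fin n) → ℕ)
    (hc : LocalColouring (completeBipartiteGraph (Fin n) (Fin n)) c 2)
    (hsimple : ∀ x y : ℕ,
      (∃ e ∈ (completeBipartiteGraph (Fin n) (Fin n)).edgeSet, c e = x) →
      (∃ e ∈ (completeBipartiteGraph (Fin n) (Fin n)).edgeSet, c e = y) →
      ∃ v, Sees (completeBipartiteGraph (Fin n) (Fin n)) c v x ∧
           Sees (completeBipartiteGraph (Fin n) (Fin n)) c v y) :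
    {x : ℕ | ∃ e ∈ (completeBipartiteGraph (Fin n) (Fin n)).edgeSet, c e = x}.ncard
      ≤ 4 := by
  by_contra hcon
  push_neg at hcon
  set G := completeBipartiteGraph (Fin n) (Fin n) with hG
  set C := {x : ℕ | ∃ e ∈ G.edgeSet, c e = x} with hCdef
  have hCfin : C.Finite := by
    by_contra hinf
    rw [Set.Infinite.ncard hinf] at hcon
    omega
  have hcard : 5 ≤ hCfin.toFinset.card := by
    rw [← Set.ncard_eq_toFinset_card C hCfin]
    omega
  obtain ⟨t, hts, htcard⟩ := Finset.exists_subset_card_eq hcard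
  set f : Fin 5 → ℕ := fun i => (t.orderIsoOfFin htcard i : ℕ) with hf
  have hmono : StrictMono f := fun i j h =>
    Subtype.coe_lt_coe.mpr ((t.orderIsoOfFin htcard).strictMono h)
  have hfC : ∀ i, f i ∈ C := fun i =>
    hCfin.mem_toFinset.mp (hts (t.orderIsoOfFin htcard i).2)
  have h01 : f 0 < f 1 := hmono (by decide)
  have h12 : f 1 < f 2 := hmono (by decide)
  have h23 : f 2 < f 3 := hmono (by decide)
  have h34 : f 3 < f 4 := hmono (by decide)
  have hS2 : ∀ v, (seenSet G c v).ncard ≤ 2 := hc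
  have pairEq : ∀ (p q : ℕ) (v : Fin n ⊕ Fin n), p ≠ q →
      p ∈ seenSet G c v → q ∈ seenSet G c v → seenSet G c v = {p, q} := by
    intro p q v hpq hp hq
    have hsub : ({p, q} : Set ℕ) ⊆ seenSet G c v := by
      rintro x (rfl | rfl)
      · exact hp
      · exact hq
    exact (Set.eq_of_subset_of_ncard_le hsub
      (by rw [Set.ncard_pair hpq]; exact hS2 v) (seenSet_finite G c v)).symm
  have getv : ∀ p q : ℕ, p ∈ C → q ∈ C → p ≠ q →
      ∃ v, seenSet G c v = {p, q} := by
    intro p q hp hq hpq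
    obtain ⟨v, hvp, hvq⟩ := hsimple p q hp hq
    exact ⟨v, pairEq p q v hpq hvp hvq⟩
  have sameSide : ∀ u w : Fin n ⊕ Fin n,
      (seenSet G c u ∩ seenSet G c w ⊆ ∅) → u.isLeft = w.isLeft := by
    intro u w hdis
    by_contra hne
    exact hdis (edgeIn G c ((adjIff u w).mpr hne))
  obtain ⟨v1, hv1⟩ := getv (f 0) (f 1) (hfC 0) (hfC 1) (by omega)
  obtain ⟨v2, hv2⟩ := getv (f 2) (f 3) (hfC 2) (hfC 3) (by omega)
  obtain ⟨v3, hv3⟩ := getv (f 0) (f 4) (hfC 0) (hfC 4) (by omega)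
  obtain ⟨v4, hv4⟩ := getv (f 1) (f 4) (hfC 1) (hfC 4) (by omega)
  have hs12 : v1.isLeft = v2.isLeft := by
    apply sameSide
    rw [hv1, hv2]
    rintro x ⟨hx1, hx2⟩
    simp only [Set.mem_insert_iff, Set.mem_singleton_iff] at hx1 hx2
    omega
  have hs32 : v3.isLeft = v2.isLeft := by
    apply sameSide
    rw [hv3, hv2]
    rintro x ⟨hx1, hx2⟩
    simp only [Set.mem_insert_iff, Set.mem_singleton_iff] at hx1 hx2
    omega
  have hs42 : v4.isLeft = v2.isLeft := by
    apply sameSide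
    rw [hv4, hv2]
    rintro x ⟨hx1, hx2⟩
    simp only [Set.mem_insert_iff, Set.mem_singleton_iff] at hx1 hx2
    omega
  have final : ∀ w : Fin n ⊕ Fin n,
      G.Adj v1 w → G.Adj v2 w → G.Adj v3 w → G.Adj v4 w → False := by
    intro w a1 a2 a3 a4
    have e1 := edgeIn G c a1
    have e2 := edgeIn G c a2
    have e3 := edgeIn G c a3
    have e4 := edgeIn G c a4
    rw [hv1] at e1
    rw [hv2] at e2
    rw [hv3] at e3
    rw [hv4] at e4
    obtain ⟨m1, w1⟩ := e1
    obtain ⟨m2, w2⟩ := e2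
    obtain ⟨m3, w3⟩ := e3
    obtain ⟨m4, w4⟩ := e4
    simp only [Set.mem_insert_iff, Set.mem_singleton_iff] at m1 m2 m3 m4
    have hne12 : c s(v1, w) ≠ c s(v2, w) := by omega
    have hSw : seenSet G c w = {c s(v1, w), c s(v2, w)} :=
      pairEq _ _ w hne12 w1 w2
    rw [hSw] at w3 w4
    simp only [Set.mem_insert_iff, Set.mem_singleton_iff] at w3 w4
    omega
  have wopp : ∃ w : Fin n ⊕ Fin n, w.isLeft ≠ v2.isLeft := by
    rcases v2 with a | a
    · exact ⟨Sum.inr a, by simp⟩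
    · exact ⟨Sum.inl a, by simp⟩
  obtain ⟨w, hw⟩ := wopp
  exact final w
    ((adjIff v1 w).mpr (by rw [hs12]; exact fun h => hw h.symm))
    ((adjIff v2 w).mpr (fun h => hw h.symm))
    ((adjIff v3 w).mpr (by rw [hs32]; exact fun h => hw h.symm))
    ((adjIff v4 w).mpr (by rw [hs42]; exact fun h => hw h.symm))
end

section
/- For every k ≥ 3 there exists a 2-local edge colouring of the complete tripartite graph with parts U, V, W of sizes |U| = 2k, |V| = |W| = k such that the vertex set cannot be partitioned into 2 or fewer pairwise vertex-disjoint monochromatic paths (i.e. at least 3 monochromatic paths are needed to cover all vertices). -/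
open SimpleGraph Set

variable {V : Type*}

abbrev Vtx (k : ℕ) := Σ i : Fin 3, ![Fin (2 * k), Fin k, Fin k] i

def uval (k : ℕ) : Vtx k → ℕ
  | ⟨0, u⟩ => (u : Fin (2*k)).val
  | ⟨1, u⟩ => (u : Fin k).val
  | ⟨2, u⟩ => (u : Fin k).val

def cls (k : ℕ) (x : Vtx k) : ℕ :=
  if x.1 = 0 then (if uval k x < k + 2 then 0 else 3)
  else if x.1 = 1 then 1 else 2

lemma vtx_cases (k : ℕ) : ∀ x : Vtx k,
    (∃ u : Fin (2*k), x = ⟨0, u⟩) ∨ (∃ u : Fin k, x = ⟨1, u⟩) ∨ (∃ u : Fin k, x = ⟨2, u⟩)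
  | ⟨0, u⟩ => Or.inl ⟨u, rfl⟩
  | ⟨1, u⟩ => Or.inr (Or.inl ⟨u, rfl⟩)
  | ⟨2, u⟩ => Or.inr (Or.inr ⟨u, rfl⟩)

lemma cls_zero {k : ℕ} (u : Fin (2*k)) (h : u.val < k+2) : cls k ⟨0, u⟩ = 0 := by
  simp [cls, uval, h]

lemma cls_three {k : ℕ} (u : Fin (2*k)) (h : ¬ u.val < k+2) : cls k ⟨0, u⟩ = 3 := by
  simp [cls, uval, h]

lemma cls_one {k : ℕ} (u : Fin k) : cls k ⟨1, u⟩ = 1 := by simp [cls, uval]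

lemma cls_two {k : ℕ} (u : Fin k) : cls k ⟨2, u⟩ = 2 := by simp [cls, uval]

lemma cls_part (k : ℕ) (x : Vtx k) :
    (x.1 = 0 ∧ (cls k x = 0 ∨ cls k x = 3)) ∨ (x.1 = 1 ∧ cls k x = 1) ∨
    (x.1 = 2 ∧ cls k x = 2) := by
  rcases vtx_cases k x with ⟨u, rfl⟩ | ⟨u, rfl⟩ | ⟨u, rfl⟩
  · refine Or.inl ⟨rfl, ?_⟩
    by_cases h : u.val < k + 2
    · exact Or.inl (cls_zero u h)
    · exact Or.inr (cls_three u h)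
  · exact Or.inr (Or.inl ⟨rfl, cls_one u⟩)
  · exact Or.inr (Or.inr ⟨rfl, cls_two u⟩)

lemma cls_zero_part {k : ℕ} {x : Vtx k} (h : cls k x = 0) : x.1 = 0 := by
  rcases cls_part k x with ⟨h1, _⟩ | ⟨_, h2⟩ | ⟨_, h2⟩
  · exact h1
  · omega
  · omega

def col (a b : ℕ) : ℕ :=
  if (a = 0 ∧ b = 1) ∨ (a = 1 ∧ b = 0) then 1
  else if (a = 0 ∧ b = 2) ∨ (a = 2 ∧ b = 0) then 2 else 3

lemma col_symm (a b : ℕ) : col a b = col b a := by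
  unfold col; split_ifs <;> tauto

def cfun (k : ℕ) : Sym2 (Vtx k) → ℕ :=
  Sym2.lift ⟨fun x y => col (cls k x) (cls k y), fun _ _ => col_symm _ _⟩

lemma cfun_mk {k : ℕ} (x y : Vtx k) : cfun k s(x, y) = col (cls k x) (cls k y) := rfl

lemma col_eq_one {a b : ℕ} (h : col a b = 1) : (a = 0 ∧ b = 1) ∨ (a = 1 ∧ b = 0) := by
  unfold col at h; split_ifs at h <;> first | assumption | omega

lemma col_eq_two {a b : ℕ} (h : col a b = 2) : (a = 0 ∧ b = 2) ∨ (a = 2 ∧ b = 0) := by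
  unfold col at h; split_ifs at h <;> first | assumption | omega

lemma col_eq_three {a b : ℕ} (h : col a b = 3) :
    ¬ ((a = 0 ∧ b = 1) ∨ (a = 1 ∧ b = 0)) ∧ ¬ ((a = 0 ∧ b = 2) ∨ (a = 2 ∧ b = 0)) := by
  unfold col at h; split_ifs at h <;> first | omega | tauto

lemma col_mem (a b : ℕ) : col a b = 1 ∨ col a b = 2 ∨ col a b = 3 := by
  unfold col; split_ifs <;> simp

abbrev TriG (k : ℕ) : SimpleGraph (Vtx k) :=
  completeMultipartiteGraph ![Fin (2 * k), Fin k, Fin k]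

lemma adj_iff {k : ℕ} (x y : Vtx k) : (TriG k).Adj x y ↔ x.1 ≠ y.1 := Iff.rfl

lemma pair_ncard_le (a b : ℕ) : ({a, b} : Set ℕ).ncard ≤ 2 := by
  have h1 := Set.ncard_insert_le a ({b} : Set ℕ)
  rw [Set.ncard_singleton] at h1
  exact h1

lemma locality (k : ℕ) : LocalColouring (TriG k) (cfun k) 2 := by
  intro v
  have key : ∃ α β : ℕ, ∀ x, (∃ w, (TriG k).Adj v w ∧ cfun k s(v, w) = x) →
      x ∈ ({α, β} : Set ℕ) := by
    rcases cls_part k v with ⟨hp, hc | hc⟩ | ⟨hp, hc⟩ | ⟨hp, hc⟩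
    · refine ⟨1, 2, fun x ⟨w, hadj, hcx⟩ => ?_⟩
      have hne : v.1 ≠ w.1 := hadj
      rw [cfun_mk, hc] at hcx
      rcases cls_part k w with ⟨hw, _⟩ | ⟨_, hw⟩ | ⟨_, hw⟩
      · exact absurd (hp.trans hw.symm) hne
      · rw [hw] at hcx; norm_num [col] at hcx; simp [hcx.symm]
      · rw [hw] at hcx; norm_num [col] at hcx; simp [hcx.symm]
    · refine ⟨3, 3, fun x ⟨w, hadj, hcx⟩ => ?_⟩
      have hne : v.1 ≠ w.1 := hadj
      rw [cfun_mk, hc] at hcx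
      rcases cls_part k w with ⟨hw, _⟩ | ⟨_, hw⟩ | ⟨_, hw⟩
      · exact absurd (hp.trans hw.symm) hne
      · rw [hw] at hcx; norm_num [col] at hcx; simp [hcx.symm]
      · rw [hw] at hcx; norm_num [col] at hcx; simp [hcx.symm]
    · refine ⟨1, 3, fun x ⟨w, hadj, hcx⟩ => ?_⟩
      have hne : v.1 ≠ w.1 := hadj
      rw [cfun_mk, hc] at hcx
      rcases cls_part k w with ⟨hw, hwc | hwc⟩ | ⟨hw, hwc⟩ | ⟨hw, hwc⟩
      · rw [hwc] at hcx; norm_num [col] at hcx; simp [hcx.symm]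
      · rw [hwc] at hcx; norm_num [col] at hcx; simp [hcx.symm]
      · exact absurd (hp.trans hw.symm) hne
      · rw [hwc] at hcx; norm_num [col] at hcx; simp [hcx.symm]
    · refine ⟨2, 3, fun x ⟨w, hadj, hcx⟩ => ?_⟩
      have hne : v.1 ≠ w.1 := hadj
      rw [cfun_mk, hc] at hcx
      rcases cls_part k w with ⟨hw, hwc | hwc⟩ | ⟨hw, hwc⟩ | ⟨hw, hwc⟩
      · rw [hwc] at hcx; norm_num [col] at hcx; simp [hcx.symm]
      · rw [hwc] at hcx; norm_num [col] at hcx; simp [hcx.symm]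
      · rw [hwc] at hcx; norm_num [col] at hcx; simp [hcx.symm]
      · exact absurd (hp.trans hw.symm) hne
  obtain ⟨α, β, hsub⟩ := key
  calc {x : ℕ | ∃ w, (TriG k).Adj v w ∧ cfun k s(v, w) = x}.ncard
      ≤ ({α, β} : Set ℕ).ncard :=
        Set.ncard_le_ncard (fun x hx => hsub x hx) (Set.toFinite _)
    _ ≤ 2 := pair_ncard_le α β

lemma support_edge {V : Type*} {G : SimpleGraph V} {a b : V} (p : G.Walk a b)
    (hp : ¬ p.Nil) : ∀ u ∈ p.support, ∃ e ∈ p.edges, u ∈ e := by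
  induction p with
  | nil => exact absurd Walk.Nil.nil hp
  | @cons a c b h q ih =>
    intro u hu
    rw [Walk.support_cons, List.mem_cons] at hu
    rcases hu with rfl | hu
    · exact ⟨s(u, c), by simp, by simp⟩
    · by_cases hq : q.Nil
      · have : q.support = [c] := Walk.nil_iff_support_eq.mp hq
        rw [this, List.mem_singleton] at hu
        subst hu
        exact ⟨s(a, u), by simp, by simp⟩
      · obtain ⟨e, he, hue⟩ := ih hq u hu
        exact ⟨e, by simp [Walk.edges_cons, he], hue⟩

lemma alt_count {V : Type*} {G : SimpleGraph V} (q0 q1 : V → Bool)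
    (hdisj : ∀ v, ¬ (q0 v = true ∧ q1 v = true))
    {a b : V} (p : G.Walk a b)
    (h : ∀ u v : V, s(u, v) ∈ p.edges →
      (q0 u = true ∧ q1 v = true) ∨ (q1 u = true ∧ q0 v = true)) :
    p.support.countP q0 ≤ p.support.countP q1 + (if q0 a then 1 else 0) := by
  induction p with
  | nil =>
    rename_i u
    by_cases hu : q0 u <;> simp [hu]
  | @cons a c b hadj q ih =>
    have hac := h a c (by simp)
    have ih' := ih (fun u v huv => h u v (by simp [Walk.edges_cons, huv]))
    rw [Walk.support_cons, List.countP_cons, List.countP_cons]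
    rcases hac with ⟨h0, h1⟩ | ⟨h1, h0⟩
    · have hc0 : q0 c = false := by
        rcases Bool.eq_false_or_eq_true (q0 c) with h' | h'
        · exact absurd ⟨h', h1⟩ (hdisj c)
        · exact h'
      rw [hc0] at ih'
      simp only [if_neg Bool.false_ne_true, add_zero] at ih'
      rw [h0]
      simp only [if_pos rfl]
      omega
    · have ha0 : q0 a = false := by
        rcases Bool.eq_false_or_eq_true (q0 a) with h' | h'
        · exact absurd ⟨h', h1⟩ (hdisj a)
        · exact h'
      rw [h0] at ih'
      simp only [if_pos rfl] at ih'
      rw [ha0, h1]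
      simp only [if_neg Bool.false_ne_true, if_pos rfl]
      omega

lemma count_bound {k : ℕ} (hk : 3 ≤ k) {u v : Vtx k} (p : (TriG k).Walk u v)
    (hpath : p.IsPath) (j : ℕ) (hj : j ≠ 0)
    (emb : Fin k → Vtx k) (himg : ∀ x : Vtx k, cls k x = j → ∃ i, emb i = x)
    (hedge : ∀ a b : Vtx k, s(a, b) ∈ p.edges →
      (cls k a = 0 ∧ cls k b = j) ∨ (cls k b = 0 ∧ cls k a = j)) :
    ∃ x : Vtx k, cls k x = 0 ∧ x ∉ p.support := by
  by_contra hcon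
  push_neg at hcon
  classical
  set q0 : Vtx k → Bool := fun z => decide (cls k z = 0) with hq0
  set q1 : Vtx k → Bool := fun z => decide (cls k z = j) with hq1
  have hdisj : ∀ z : Vtx k, ¬ (q0 z = true ∧ q1 z = true) := by
    intro z ⟨h1, h2⟩
    simp only [hq0, hq1, decide_eq_true_eq] at h1 h2
    omega
  have hedge' : ∀ a b : Vtx k, s(a, b) ∈ p.edges →
      (q0 a = true ∧ q1 b = true) ∨ (q1 a = true ∧ q0 b = true) := by
    intro a b hab
    rcases hedge a b hab with ⟨h1, h2⟩ | ⟨h1, h2⟩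
    · left; exact ⟨by simp [hq0, h1], by simp [hq1, h2]⟩
    · right; exact ⟨by simp [hq1, h2], by simp [hq0, h1]⟩
  have halt := alt_count q0 q1 hdisj p hedge'
  have hnd : p.support.Nodup := hpath.support_nodup
  have hA : k + 2 ≤ p.support.countP q0 := by
    set emb2 : Fin (k+2) → Vtx k := fun i => ⟨0, ⟨i.val, by omega⟩⟩ with he2
    have hinj : Function.Injective emb2 := by
      intro i i' h
      have h2 := congrArg (uval k) h
      simp only [he2, uval] at h2
      exact Fin.ext h2
    have hsub : Finset.univ.image emb2 ⊆ (p.support.filter q0).toFinset := by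
      intro x hx
      obtain ⟨i, _, rfl⟩ := Finset.mem_image.mp hx
      have hcl : cls k (emb2 i) = 0 := cls_zero _ i.isLt
      rw [List.mem_toFinset, List.mem_filter]
      exact ⟨hcon _ hcl, by simp [hq0, hcl]⟩
    have hcard : (Finset.univ.image emb2).card = k + 2 := by
      rw [Finset.card_image_of_injective _ hinj, Finset.card_univ, Fintype.card_fin]
    calc k + 2 = (Finset.univ.image emb2).card := hcard.symm
      _ ≤ (p.support.filter q0).toFinset.card := Finset.card_le_card hsub
      _ = (p.support.filter q0).length :=
          List.toFinset_card_of_nodup (hnd.filter q0)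
      _ = p.support.countP q0 := (List.countP_eq_length_filter).symm
  have hB : p.support.countP q1 ≤ k := by
    have hsub : (p.support.filter q1).toFinset ⊆ Finset.univ.image emb := by
      intro z hz
      rw [List.mem_toFinset, List.mem_filter] at hz
      have : cls k z = j := by
        have := hz.2
        simpa [hq1, decide_eq_true_eq] using this
      obtain ⟨i, hi⟩ := himg z this
      exact Finset.mem_image.mpr ⟨i, Finset.mem_univ _, hi⟩
    calc p.support.countP q1 = (p.support.filter q1).length :=
          List.countP_eq_length_filter
      _ = (p.support.filter q1).toFinset.card :=
          (List.toFinset_card_of_nodup (hnd.filter q1)).symm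
      _ ≤ (Finset.univ.image emb).card := Finset.card_le_card hsub
      _ ≤ Finset.univ.card := Finset.card_image_le
      _ = k := by rw [Finset.card_univ, Fintype.card_fin]
  have halt' : p.support.countP q0 ≤ p.support.countP q1 + 1 :=
    halt.trans (Nat.add_le_add_left (by split <;> omega) _)
  omega

lemma classify {k : ℕ} (hk : 3 ≤ k) {S : Set (Vtx k)}
    (hS : IsMonoPath (TriG k) (cfun k) S) :
    (∃ v, S = {v}) ∨
    ((∀ x ∈ S, cls k x = 0 ∨ cls k x = 1) ∧ ∃ x, cls k x = 0 ∧ x ∉ S) ∨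
    ((∀ x ∈ S, cls k x = 0 ∨ cls k x = 2) ∧ ∃ x, cls k x = 0 ∧ x ∉ S) ∨
    (∀ x ∈ S, cls k x ≠ 0) := by
  obtain ⟨u, v, p, hpath, rfl, j, hmono⟩ := hS
  by_cases hnil : p.Nil
  · left
    refine ⟨u, ?_⟩
    have hsup := Walk.nil_iff_support_eq.mp hnil
    ext z
    simp [hsup]
  have hne : p.edges ≠ [] := by
    intro h
    have hlen : p.length = 0 := by
      have := p.length_edges
      rw [h] at this
      simpa using this.symm
    exact hnil (Walk.nil_iff_length_eq.mpr hlen)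
  obtain ⟨e0, he0⟩ := List.exists_mem_of_ne_nil _ hne
  have hj : j = 1 ∨ j = 2 ∨ j = 3 := by
    revert he0
    induction e0 using Sym2.ind with
    | _ a b =>
      intro he0
      have h := hmono _ he0
      rw [cfun_mk] at h
      rcases col_mem (cls k a) (cls k b) with h' | h' | h' <;> omega
  have hmem : ∀ z ∈ p.support, ∃ a b : Vtx k, (TriG k).Adj a b ∧
      col (cls k a) (cls k b) = j ∧ (z = a ∨ z = b) := by
    intro z hz
    obtain ⟨e, he, hze⟩ := support_edge p hnil z hz
    revert he hze
    induction e using Sym2.ind with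
    | _ a b =>
      intro he hze
      exact ⟨a, b, (SimpleGraph.mem_edgeSet _).mp (p.edges_subset_edgeSet he),
        by rw [← cfun_mk]; exact hmono _ he, Sym2.mem_iff.mp hze⟩
  rcases hj with rfl | rfl | rfl
  · right; left
    constructor
    · intro z hz
      obtain ⟨a, b, _, hcol, hz'⟩ := hmem z hz
      rcases col_eq_one hcol with ⟨h1, h2⟩ | ⟨h1, h2⟩ <;> rcases hz' with rfl | rfl <;> omega
    · have himg : ∀ x : Vtx k, cls k x = 1 → ∃ i : Fin k, (⟨1, i⟩ : Vtx k) = x := by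
        intro x hx
        rcases vtx_cases k x with ⟨w, rfl⟩ | ⟨w, rfl⟩ | ⟨w, rfl⟩
        · by_cases h : w.val < k + 2
          · rw [cls_zero w h] at hx; omega
          · rw [cls_three w h] at hx; omega
        · exact ⟨w, rfl⟩
        · rw [cls_two w] at hx; omega
      have hedge : ∀ a b : Vtx k, s(a, b) ∈ p.edges →
          (cls k a = 0 ∧ cls k b = 1) ∨ (cls k b = 0 ∧ cls k a = 1) := by
        intro a b hab
        have h := hmono _ hab
        rw [cfun_mk] at h
        rcases col_eq_one h with ⟨h1, h2⟩ | ⟨h1, h2⟩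
        · exact Or.inl ⟨h1, h2⟩
        · exact Or.inr ⟨h2, h1⟩
      obtain ⟨x, hx0, hxs⟩ := count_bound hk p hpath 1 one_ne_zero _ himg hedge
      exact ⟨x, hx0, hxs⟩
  · right; right; left
    constructor
    · intro z hz
      obtain ⟨a, b, _, hcol, hz'⟩ := hmem z hz
      rcases col_eq_two hcol with ⟨h1, h2⟩ | ⟨h1, h2⟩ <;> rcases hz' with rfl | rfl <;> omega
    · have himg : ∀ x : Vtx k, cls k x = 2 → ∃ i : Fin k, (⟨2, i⟩ : Vtx k) = x := by
        intro x hx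
        rcases vtx_cases k x with ⟨w, rfl⟩ | ⟨w, rfl⟩ | ⟨w, rfl⟩
        · by_cases h : w.val < k + 2
          · rw [cls_zero w h] at hx; omega
          · rw [cls_three w h] at hx; omega
        · rw [cls_one w] at hx; omega
        · exact ⟨w, rfl⟩
      have hedge : ∀ a b : Vtx k, s(a, b) ∈ p.edges →
          (cls k a = 0 ∧ cls k b = 2) ∨ (cls k b = 0 ∧ cls k a = 2) := by
        intro a b hab
        have h := hmono _ hab
        rw [cfun_mk] at h
        rcases col_eq_two h with ⟨h1, h2⟩ | ⟨h1, h2⟩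
        · exact Or.inl ⟨h1, h2⟩
        · exact Or.inr ⟨h2, h1⟩
      obtain ⟨x, hx0, hxs⟩ := count_bound hk p hpath 2 two_ne_zero _ himg hedge
      exact ⟨x, hx0, hxs⟩
  · right; right; right
    intro z hz hz0
    obtain ⟨a, b, hadj, hcol, hz'⟩ := hmem z hz
    have h3 := col_eq_three hcol
    rcases hz' with rfl | rfl
    · rcases cls_part k b with ⟨hb1, _⟩ | ⟨_, hb2⟩ | ⟨_, hb2⟩
      · exact hadj ((cls_zero_part hz0).trans hb1.symm)
      · exact h3.1 (Or.inl ⟨hz0, hb2⟩)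
      · exact h3.2 (Or.inl ⟨hz0, hb2⟩)
    · rcases cls_part k a with ⟨ha1, _⟩ | ⟨_, ha2⟩ | ⟨_, ha2⟩
      · exact hadj (ha1.trans (cls_zero_part hz0).symm)
      · exact h3.1 (Or.inr ⟨ha2, hz0⟩)
      · exact h3.2 (Or.inr ⟨ha2, hz0⟩)

lemma mk_ne_part {k : ℕ} {i i' : Fin 3} {u : ![Fin (2*k), Fin k, Fin k] i}
    {u' : ![Fin (2*k), Fin k, Fin k] i'} (h : i ≠ i') :
    (⟨i, u⟩ : Vtx k) ≠ ⟨i', u'⟩ :=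
  fun h' => h (congrArg Sigma.fst h')

lemma mk0_ne {k : ℕ} {u u' : Fin (2*k)} (h : u.val ≠ u'.val) :
    (⟨0, u⟩ : Vtx k) ≠ ⟨0, u'⟩ :=
  fun h' => h (congrArg (uval k) h')

lemma cover_contra {k : ℕ} (hk : 3 ≤ k) {S T : Set (Vtx k)}
    (hS : IsMonoPath (TriG k) (cfun k) S) (hT : IsMonoPath (TriG k) (cfun k) T)
    (hU : S ∪ T = Set.univ) : False := by
  have memST : ∀ x : Vtx k, x ∈ S ∪ T := fun x => by rw [hU]; exact Set.mem_univ x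
  set a1 : Vtx k := ⟨0, ⟨0, by omega⟩⟩ with ha1d
  set a2 : Vtx k := ⟨0, ⟨1, by omega⟩⟩ with ha2d
  set a3 : Vtx k := ⟨0, ⟨2, by omega⟩⟩ with ha3d
  set b : Vtx k := ⟨1, ⟨0, by omega⟩⟩ with hbd
  set cc : Vtx k := ⟨2, ⟨0, by omega⟩⟩ with hccd
  set d : Vtx k := ⟨0, ⟨k + 2, by omega⟩⟩ with hdd
  have ha1 : cls k a1 = 0 := cls_zero _ (show (0:ℕ) < k + 2 by omega)
  have ha2 : cls k a2 = 0 := cls_zero _ (show (1:ℕ) < k + 2 by omega)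
  have ha3 : cls k a3 = 0 := cls_zero _ (show (2:ℕ) < k + 2 by omega)
  have hb : cls k b = 1 := cls_one _
  have hcc : cls k cc = 2 := cls_two _
  have hd : cls k d = 3 := cls_three _ (show ¬ (k + 2 < k + 2) by omega)
  have d12 : a1 ≠ a2 := mk0_ne (by simp)
  have d13 : a1 ≠ a3 := mk0_ne (by simp)
  have d23 : a2 ≠ a3 := mk0_ne (by simp)
  have dccd : cc ≠ d := mk_ne_part (by decide)
  have dbd : b ≠ d := mk_ne_part (by decide)
  rcases classify hk hS with ⟨v, rfl⟩ | ⟨hm, hn⟩ | ⟨hm, hn⟩ | hno <;>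
    rcases classify hk hT with ⟨w, rfl⟩ | ⟨hm', hn'⟩ | ⟨hm', hn'⟩ | hno'
  · -- (1,1)
    have e1 := memST a1; have e2 := memST a2; have e3 := memST a3
    simp only [Set.mem_union, Set.mem_singleton_iff] at e1 e2 e3
    rcases e1 with h1 | h1 <;> rcases e2 with h2 | h2 <;> rcases e3 with h3 | h3 <;>
      first
        | exact d12 (h1.trans h2.symm)
        | exact d13 (h1.trans h3.symm)
        | exact d23 (h2.trans h3.symm)
  · -- (1,2)
    have ec := memST cc; have ed := memST d
    simp only [Set.mem_union, Set.mem_singleton_iff] at ec ed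
    have hcv : cc = v := by
      rcases ec with h | h
      · exact h
      · have := hm' cc h; omega
    have hdv : d = v := by
      rcases ed with h | h
      · exact h
      · have := hm' d h; omega
    exact dccd (hcv.trans hdv.symm)
  · -- (1,3)
    have eb := memST b; have ed := memST d
    simp only [Set.mem_union, Set.mem_singleton_iff] at eb ed
    have hbv : b = v := by
      rcases eb with h | h
      · exact h
      · have := hm' b h; omega
    have hdv : d = v := by
      rcases ed with h | h
      · exact h
      · have := hm' d h; omega
    exact dbd (hbv.trans hdv.symm)
  · -- (1,4)
    have e1 := memST a1; have e2 := memST a2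
    simp only [Set.mem_union, Set.mem_singleton_iff] at e1 e2
    have h1 : a1 = v := by
      rcases e1 with h | h
      · exact h
      · exact absurd ha1 (hno' a1 h)
    have h2 : a2 = v := by
      rcases e2 with h | h
      · exact h
      · exact absurd ha2 (hno' a2 h)
    exact d12 (h1.trans h2.symm)
  · -- (2,1)
    have ec := memST cc; have ed := memST d
    simp only [Set.mem_union, Set.mem_singleton_iff] at ec ed
    have hcv : cc = w := by
      rcases ec with h | h
      · have := hm cc h; omega
      · exact h
    have hdv : d = w := by
      rcases ed with h | h
      · have := hm d h; omega
      · exact h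
    exact dccd (hcv.trans hdv.symm)
  · -- (2,2)
    rcases memST cc with h | h
    · have := hm cc h; omega
    · have := hm' cc h; omega
  · -- (2,3)
    rcases memST d with h | h
    · have := hm d h; omega
    · have := hm' d h; omega
  · -- (2,4)
    obtain ⟨x, hx0, hxS⟩ := hn
    rcases memST x with h | h
    · exact hxS h
    · exact hno' x h hx0
  · -- (3,1)
    have eb := memST b; have ed := memST d
    simp only [Set.mem_union, Set.mem_singleton_iff] at eb ed
    have hbv : b = w := by
      rcases eb with h | h
      · have := hm b h; omega
      · exact h
    have hdv : d = w := by
      rcases ed with h | h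
      · have := hm d h; omega
      · exact h
    exact dbd (hbv.trans hdv.symm)
  · -- (3,2)
    rcases memST d with h | h
    · have := hm d h; omega
    · have := hm' d h; omega
  · -- (3,3)
    rcases memST b with h | h
    · have := hm b h; omega
    · have := hm' b h; omega
  · -- (3,4)
    obtain ⟨x, hx0, hxS⟩ := hn
    rcases memST x with h | h
    · exact hxS h
    · exact hno' x h hx0
  · -- (4,1)
    have e1 := memST a1; have e2 := memST a2
    simp only [Set.mem_union, Set.mem_singleton_iff] at e1 e2
    have h1 : a1 = w := by
      rcases e1 with h | h
      · exact absurd ha1 (hno a1 h)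
      · exact h
    have h2 : a2 = w := by
      rcases e2 with h | h
      · exact absurd ha2 (hno a2 h)
      · exact h
    exact d12 (h1.trans h2.symm)
  · -- (4,2)
    obtain ⟨x, hx0, hxT⟩ := hn'
    rcases memST x with h | h
    · exact hno x h hx0
    · exact hxT h
  · -- (4,3)
    obtain ⟨x, hx0, hxT⟩ := hn'
    rcases memST x with h | h
    · exact hno x h hx0
    · exact hxT h
  · -- (4,4)
    rcases memST a1 with h | h
    · exact hno a1 h ha1
    · exact hno' a1 h ha1


/-- For every `k ≥ 3` there is a 2-local edge colouring of the
complete tripartite graph with parts of sizes `2k, k, k` whose vertex set cannot be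
partitioned into 2 or fewer pairwise vertex-disjoint monochromatic paths. -/
theorem two_local_tripartite_needs_three_paths (k : ℕ) (hk : 3 ≤ k) :
    ∃ c : Sym2 (Σ i : Fin 3, ![Fin (2 * k), Fin k, Fin k] i) → ℕ,
      LocalColouring (completeMultipartiteGraph ![Fin (2 * k), Fin k, Fin k]) c 2 ∧
      ¬ ∃ PP : Finset (Set (Σ i : Fin 3, ![Fin (2 * k), Fin k, Fin k] i)),
          PP.card ≤ 2 ∧
          (∀ S ∈ PP, IsMonoPath (completeMultipartiteGraph
            ![Fin (2 * k), Fin k, Fin k]) c S) ∧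
          (PP : Set (Set (Σ i : Fin 3, ![Fin (2 * k), Fin k, Fin k] i))).PairwiseDisjoint id ∧
          ⋃₀ (PP : Set (Set (Σ i : Fin 3, ![Fin (2 * k), Fin k, Fin k] i))) =
            Set.univ := by
  classical
  refine ⟨cfun k, locality k, ?_⟩
  rintro ⟨PP, hcard, hmp, _, huniv⟩
  have hc : PP.card = 0 ∨ PP.card = 1 ∨ PP.card = 2 := by omega
  rcases hc with h | h | h
  · rw [Finset.card_eq_zero] at h
    subst h
    have : (⟨0, ⟨0, by omega⟩⟩ : Vtx k) ∈ ⋃₀ ((∅ : Finset (Set (Vtx k))) :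
        Set (Set (Vtx k))) := by
      rw [huniv]; trivial
    simp at this
  · obtain ⟨S, rfl⟩ := Finset.card_eq_one.mp h
    have hmS := hmp S (Finset.mem_singleton_self S)
    refine cover_contra hk hmS hmS ?_
    rw [Set.union_self]
    simpa using huniv
  · obtain ⟨S, T, hST, rfl⟩ := Finset.card_eq_two.mp h
    have hmS := hmp S (by simp)
    have hmT := hmp T (by simp)
    refine cover_contra hk hmS hmT ?_
    rw [← huniv]
    simp
end
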